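/- arXiv:1203.2070 — 8 statements merged into one kernel-verified Lean document; each statement's English description precedes it below -/
import Mathlib

section
/- Under the stated assumptions, the primal and dual optimal values coincide and are finite, i.e. v(P) = v(D) ∈ ℝ, and the primal problem attains its infimum: there exists x̄ ∈ ℝ^n with f(x̄) + g(A x̄) = v(P). -/
open scoped RealInnerProductSpace
noncomputable section

/-- `Euc k` is the Euclidean space `ℝ^k`. -/
abbrev Euc (k : ℕ) := EuclideanSpace ℝ (Fin k)

/-- `f` is proper: nowhere `-∞` and somewhere finite. -/
def IsProperFn {k : ℕ} (f : Euc k → EReal) : Prop :=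
  (∀ x, f x ≠ ⊥) ∧ ∃ x, f x ≠ ⊤

/-- Convexity of an extended-real-valued function. -/
def IsConvexFn {k : ℕ} (f : Euc k → EReal) : Prop :=
  ∀ x y : Euc k, ∀ t : ℝ, 0 < t → t < 1 →
    f (t • x + (1 - t) • y) ≤ (t : EReal) * f x + ((1 - t : ℝ) : EReal) * f y

/-- `f` is proper, convex, lower semicontinuous with bounded effective domain. -/
def NiceFn {k : ℕ} (f : Euc k → EReal) : Prop :=
  IsProperFn f ∧ IsConvexFn f ∧ LowerSemicontinuous f ∧
    Bornology.IsBounded {x | f x ≠ ⊤}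

/-- The Fenchel conjugate `f*(q) = sup_x {⟨q,x⟩ - f(x)}` (real-valued). -/
noncomputable def conjFn {k : ℕ} (f : Euc k → EReal) (q : Euc k) : ℝ :=
  (⨆ x, ((⟪q, x⟫ : ℝ) : EReal) - f x).toReal

/-- The Fenchel conjugate as an extended real. -/
noncomputable def conjE {k : ℕ} (f : Euc k → EReal) (q : Euc k) : EReal :=
  ⨆ x, ((⟪q, x⟫ : ℝ) : EReal) - f x

/-- The smoothed conjugate `f_r*(q) = sup_x {⟨q,x⟩ - f(x) - (r/2)‖x‖²}`. -/
noncomputable def conjSm {k : ℕ} (f : Euc k → EReal) (r : ℝ) (q : Euc k) : ℝ :=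
  (⨆ x, ((⟪q, x⟫ - r / 2 * ‖x‖ ^ 2 : ℝ) : EReal) - f x).toReal

/-- The proximal objective `x ↦ f(x) + (r/2)‖u - x‖²`. -/
noncomputable def proxObj {k : ℕ} (f : Euc k → EReal) (r : ℝ) (u x : Euc k) : EReal :=
  f x + ((r / 2 * ‖u - x‖ ^ 2 : ℝ) : EReal)

/-- `D_f = sup {‖x‖²/2 : x ∈ dom f}`. -/
noncomputable def Dsup {k : ℕ} (f : Euc k → EReal) : ℝ :=
  sSup ((fun x : Euc k => ‖x‖ ^ 2 / 2) '' {x | f x ≠ ⊤})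

/-- `x0` is the unique global minimizer of `h`. -/
def UniqMin {α : Type*} {β : Type*} [Preorder β] (h : α → β) (x0 : α) : Prop :=
  (∀ x, h x0 ≤ h x) ∧ ∀ x, (∀ y, h x ≤ h y) → x = x0

/-- The dual objective `θ(p) = f*(A*p) + g*(-p)`. -/
noncomputable def theta {n m : ℕ} (f : Euc n → EReal) (g : Euc m → EReal)
    (A : Euc n →L[ℝ] Euc m) (p : Euc m) : ℝ :=
  conjFn f (ContinuousLinearMap.adjoint A p) + conjFn g (-p)

/-- The singly smoothed dual objective `θ_{ρ,μ}(p) = f_ρ*(A*p) + g_μ*(-p)`. -/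
noncomputable def thetaSm {n m : ℕ} (f : Euc n → EReal) (g : Euc m → EReal)
    (A : Euc n →L[ℝ] Euc m) (r s : ℝ) (p : Euc m) : ℝ :=
  conjSm f r (ContinuousLinearMap.adjoint A p) + conjSm g s (-p)

/-- The doubly smoothed dual objective `θ_{ρ,μ,κ}(p) = θ_{ρ,μ}(p) + (κ/2)‖p‖²`. -/
noncomputable def thetaSmK {n m : ℕ} (f : Euc n → EReal) (g : Euc m → EReal)
    (A : Euc n →L[ℝ] Euc m) (r s c : ℝ) (p : Euc m) : ℝ :=
  thetaSm f g A r s p + c / 2 * ‖p‖ ^ 2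

/-- The optimal value of the primal problem `v(P) = inf {f(x) + g(Ax)}`. -/
noncomputable def vPrimal {n m : ℕ} (f : Euc n → EReal) (g : Euc m → EReal)
    (A : Euc n →L[ℝ] Euc m) : EReal := ⨅ x, f x + g (A x)

/-- The optimal value of the dual problem `v(D) = -inf θ`. -/
noncomputable def vDual {n m : ℕ} (f : Euc n → EReal) (g : Euc m → EReal)
    (A : Euc n →L[ℝ] Euc m) : ℝ := -(⨅ p, theta f g A p)

/-!
Since `dom f` is bounded, `f` is `⊤` off a compact set, so the lower semicontinuous primal
objective attains its minimum `r`, and weak duality (Fenchel–Young at the minimiser) gives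
`θ ≥ -r`. For the converse, the epigraph `E` of the value function
`u ↦ inf_x f x + g (A x + u)` is convex, and closed because the infimum runs over a compact set.
For `t < r` the point `(0, t)` lies outside `E` while `(0, r)` lies in it, so a separating
hyperplane is non-vertical; normalising it gives `p` with `θ(p) ≤ -t`.
-/

lemma exists_coe_of_ne_top_of_ne_bot {a : EReal} (ha : a ≠ ⊤) (ha' : a ≠ ⊥) :
    ∃ r : ℝ, a = r :=
  ⟨a.toReal, (EReal.coe_toReal ha ha').symm⟩

lemma exists_coe_of_add_le_coe {a b : EReal} {t : ℝ} (ha : a ≠ ⊥) (hb : b ≠ ⊥)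
    (h : a + b ≤ t) : ∃ a' b' : ℝ, a = a' ∧ b = b' ∧ a' + b' ≤ t := by
  have ha_top : a ≠ ⊤ := by rintro rfl; simp [EReal.top_add_of_ne_bot hb] at h
  have hb_top : b ≠ ⊤ := by rintro rfl; simp [EReal.add_top_of_ne_bot ha] at h
  obtain ⟨a', rfl⟩ := exists_coe_of_ne_top_of_ne_bot ha_top ha
  obtain ⟨b', rfl⟩ := exists_coe_of_ne_top_of_ne_bot hb_top hb
  exact ⟨a', b', rfl, rfl, by exact_mod_cast h⟩

lemma LowerSemicontinuous.add_of_ne_bot {α : Type*} [TopologicalSpace α] {F G : α → EReal}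
    (hF : LowerSemicontinuous F) (hG : LowerSemicontinuous G) (hF' : ∀ z, F z ≠ ⊥)
    (hG' : ∀ z, G z ≠ ⊥) : LowerSemicontinuous fun z => F z + G z :=
  hF.add' hG fun z => EReal.continuousAt_add (Or.inr (hG' z)) (Or.inl (hF' z))

lemma LowerSemicontinuous.exists_forall_le_of_eq_top {α β : Type*} [TopologicalSpace α]
    [LinearOrder β] [OrderTop β] {F : α → β} (hF : LowerSemicontinuous F) {K : Set α}
    (hK : IsCompact K) (hne : K.Nonempty) (htop : ∀ x ∉ K, F x = ⊤) :
    ∃ x ∈ K, ∀ y, F x ≤ F y := by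
  obtain ⟨x, hxK, hx⟩ := (hF.lowerSemicontinuousOn K).exists_isMinOn hne hK
  refine ⟨x, hxK, fun y => ?_⟩
  by_cases hy : y ∈ K
  · exact hx hy
  · simp [htop y hy]

lemma LowerSemicontinuous.isClosed_setOf_exists_le {α β : Type*} [TopologicalSpace α]
    [TopologicalSpace β] {F : α × β → EReal} (hF : LowerSemicontinuous F) {K : Set α}
    (hK : IsCompact K) (htop : ∀ x ∉ K, ∀ u, F (x, u) = ⊤) :
    IsClosed {w : β × ℝ | ∃ x, F (x, w.1) ≤ w.2} := by
  have hS : IsClosed {z : (β × ℝ) × α | F (z.2, z.1.1) ≤ z.1.2} :=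
    hF.isClosed_epigraph.preimage <|
      (continuous_snd.prodMk (continuous_fst.comp continuous_fst)).prodMk
        (continuous_coe_real_ereal.comp (continuous_snd.comp continuous_fst))
  convert hS.relPreimage_of_isCompact hK using 1
  ext w
  refine ⟨fun ⟨x, hx⟩ => ⟨x, ?_, hx⟩, fun ⟨x, _, hx⟩ => ⟨x, hx⟩⟩
  by_contra hxK
  simp [htop x hxK] at hx

lemma Bornology.IsBounded.exists_isCompact_eq_top {E : Type*} [PseudoMetricSpace E]
    [ProperSpace E] {f : E → EReal} (hf : Bornology.IsBounded {x | f x ≠ ⊤}) :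
    ∃ K, IsCompact K ∧ ∀ x ∉ K, f x = ⊤ :=
  ⟨closure {x | f x ≠ ⊤}, hf.isCompact_closure,
    fun _ hx => by_contra fun h => hx (subset_closure h)⟩

lemma Convex.exists_lt_inner_add_of_notMem {H : Type*} [NormedAddCommGroup H]
    [InnerProductSpace ℝ H] [CompleteSpace H] {E : Set (H × ℝ)} (hconv : Convex ℝ E)
    (hclosed : IsClosed E) {r t : ℝ} (hr : ((0 : H), r) ∈ E) (ht : ((0 : H), t) ∉ E)
    (htr : t < r) : ∃ p : H, ∀ w ∈ E, t < ⟪p, w.1⟫ + w.2 := by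
  obtain ⟨L, u, hLE, hLt⟩ := geometric_hahn_banach_closed_point hconv hclosed ht
  set q : H := (InnerProductSpace.toDual ℝ H).symm (L.comp (ContinuousLinearMap.inl ℝ H ℝ))
  set β : ℝ := L (0, 1)
  have hL : ∀ w : H × ℝ, L w = ⟪q, w.1⟫ + w.2 * β := by
    rintro ⟨v, s⟩
    have hvs : ((v, s) : H × ℝ) = (v, 0) + s • ((0 : H), (1 : ℝ)) := by simp
    rw [hvs, map_add, map_smul, InnerProductSpace.toDual_symm_apply]
    simp [β]
  have hβ : β < 0 := by
    have := hLE _ hr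
    simp only [hL, inner_zero_right, zero_add] at this hLt
    nlinarith
  refine ⟨β⁻¹ • q, fun w hw => ?_⟩
  have h := (hLE w hw).trans hLt
  simp only [hL, inner_zero_right, zero_add] at h
  rw [real_inner_smul_left]
  have hβw : (β⁻¹ * ⟪q, w.1⟫ + w.2) * β = ⟪q, w.1⟫ + w.2 * β := by
    field_simp [hβ.ne]
  exact lt_of_mul_lt_mul_of_nonpos_right (hβw ▸ h) hβ.le

lemma IsConvexFn.le_coe_combo {k : ℕ} {f : Euc k → EReal} (hf : IsConvexFn f) {x y : Euc k}
    {a b s : ℝ} (ha : f x = a) (hb : f y = b) (hs₀ : 0 < s) (hs₁ : s < 1) :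
    f (s • x + (1 - s) • y) ≤ ((s * a + (1 - s) * b : ℝ) : EReal) := by
  have := hf x y s hs₀ hs₁
  rw [ha, hb] at this
  exact_mod_cast this

lemma coe_inner_sub_le_conjE {k : ℕ} {f : Euc k → EReal} {x : Euc k} {a : ℝ} (ha : f x = a)
    (q : Euc k) : ((⟪q, x⟫ - a : ℝ) : EReal) ≤ conjE f q := by
  refine le_trans ?_ (le_iSup (fun x => ((⟪q, x⟫ : ℝ) : EReal) - f x) x)
  rw [ha, EReal.coe_sub]

lemma exists_lt_coe_inner_sub_of_lt_conjE {k : ℕ} {f : Euc k → EReal} (hf : ∀ x, f x ≠ ⊥)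
    {q : Euc k} {c : EReal} (hc : c < conjE f q) :
    ∃ x, ∃ a : ℝ, f x = a ∧ c < ((⟪q, x⟫ - a : ℝ) : EReal) := by
  obtain ⟨x, hx⟩ := lt_iSup_iff.1 hc
  have hx_top : f x ≠ ⊤ := by rintro h; simp [h] at hx
  obtain ⟨a, ha⟩ := exists_coe_of_ne_top_of_ne_bot hx_top (hf x)
  exact ⟨x, a, ha, by rwa [ha, ← EReal.coe_sub] at hx⟩

lemma conjE_add_conjE_le {k l : ℕ} {f : Euc k → EReal} {g : Euc l → EReal}
    (hf : ∀ x, f x ≠ ⊥) (hg : ∀ y, g y ≠ ⊥) {q₁ : Euc k} {q₂ : Euc l} {c : ℝ}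
    (h : ∀ x y (a b : ℝ), f x = a → g y = b → ⟪q₁, x⟫ - a + (⟪q₂, y⟫ - b) ≤ c) :
    conjE f q₁ + conjE g q₂ ≤ c := by
  refine EReal.add_le_of_forall_lt fun a' ha' b' hb' => ?_
  obtain ⟨x, a, ha, hxa⟩ := exists_lt_coe_inner_sub_of_lt_conjE hf ha'
  obtain ⟨y, b, hb, hyb⟩ := exists_lt_coe_inner_sub_of_lt_conjE hg hb'
  calc a' + b' ≤ ((⟪q₁, x⟫ - a : ℝ) : EReal) + ((⟪q₂, y⟫ - b : ℝ) : EReal) :=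
        add_le_add hxa.le hyb.le
    _ ≤ c := by exact_mod_cast h x y a b ha hb

section Duality

variable {n m : ℕ} {f : Euc n → EReal} {g : Euc m → EReal} {A : Euc n →L[ℝ] Euc m}

/-- The epigraph of the value function `u ↦ inf_x f x + g (A x + u)` of the perturbed primal
problem. -/
def valueEpigraph (f : Euc n → EReal) (g : Euc m → EReal) (A : Euc n →L[ℝ] Euc m) :
    Set (Euc m × ℝ) :=
  {w | ∃ x, f x + g (A x + w.1) ≤ w.2}

lemma convex_valueEpigraph (hfb : ∀ x, f x ≠ ⊥) (hgb : ∀ y, g y ≠ ⊥) (hfc : IsConvexFn f)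
    (hgc : IsConvexFn g) : Convex ℝ (valueEpigraph f g A) := by
  refine convex_iff_openSegment_subset.2 ?_
  rintro ⟨u, t⟩ ⟨x, hx⟩ ⟨u', t'⟩ ⟨x', hx'⟩ _ ⟨s, s', hs, hs', hss, rfl⟩
  obtain rfl : s' = 1 - s := by linarith
  obtain ⟨a, b, ha, hb, hab⟩ := exists_coe_of_add_le_coe (hfb _) (hgb _) hx
  obtain ⟨a', b', ha', hb', hab'⟩ := exists_coe_of_add_le_coe (hfb _) (hgb _) hx'
  refine ⟨s • x + (1 - s) • x', ?_⟩
  have hA : A (s • x + (1 - s) • x') + (s • u + (1 - s) • u') =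
      s • (A x + u) + (1 - s) • (A x' + u') := by
    simp only [map_add, map_smul]
    module
  simp only [Prod.fst_add, Prod.smul_fst, Prod.snd_add, Prod.smul_snd, smul_eq_mul, hA]
  calc _ ≤ ((s * a + (1 - s) * a' : ℝ) : EReal) + ((s * b + (1 - s) * b' : ℝ) : EReal) :=
        add_le_add (hfc.le_coe_combo ha ha' hs (by linarith))
          (hgc.le_coe_combo hb hb' hs (by linarith))
    _ ≤ _ := by
        norm_cast
        nlinarith

lemma isClosed_valueEpigraph (hfb : ∀ x, f x ≠ ⊥) (hgb : ∀ y, g y ≠ ⊥)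
    (hfl : LowerSemicontinuous f) (hgl : LowerSemicontinuous g)
    (hfd : Bornology.IsBounded {x | f x ≠ ⊤}) : IsClosed (valueEpigraph f g A) := by
  obtain ⟨K, hK, hfK⟩ := hfd.exists_isCompact_eq_top
  refine LowerSemicontinuous.isClosed_setOf_exists_le (F := fun z => f z.1 + g (A z.1 + z.2))
    ?_ hK fun x hx u => by simp [hfK x hx, EReal.top_add_of_ne_bot (hgb _)]
  exact (hfl.comp continuous_fst).add_of_ne_bot
    (hgl.comp ((A.continuous.comp continuous_fst).add continuous_snd)) (fun _ => hfb _)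
    (fun _ => hgb _)

lemma exists_primal_minimizer (hfb : ∀ x, f x ≠ ⊥) (hgb : ∀ y, g y ≠ ⊥)
    (hfl : LowerSemicontinuous f) (hgl : LowerSemicontinuous g)
    (hfd : Bornology.IsBounded {x | f x ≠ ⊤}) (hfeas : ∃ x, f x ≠ ⊤ ∧ g (A x) ≠ ⊤) :
    ∃ x₀ : Euc n, ∃ a b : ℝ, f x₀ = a ∧ g (A x₀) = b ∧
      ∀ x, ((a + b : ℝ) : EReal) ≤ f x + g (A x) := by
  obtain ⟨K, hK, hfK⟩ := hfd.exists_isCompact_eq_top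
  obtain ⟨x₁, hfx₁, hgx₁⟩ := hfeas
  have hlsc : LowerSemicontinuous fun x => f x + g (A x) :=
    hfl.add_of_ne_bot (hgl.comp A.continuous) hfb fun _ => hgb _
  obtain ⟨x₀, -, hx₀⟩ := hlsc.exists_forall_le_of_eq_top hK
    ⟨x₁, by_contra fun h => hfx₁ (hfK x₁ h)⟩
    fun x hx => by simp [hfK x hx, EReal.top_add_of_ne_bot (hgb _)]
  obtain ⟨a₁, ha₁⟩ := exists_coe_of_ne_top_of_ne_bot hfx₁ (hfb x₁)
  obtain ⟨b₁, hb₁⟩ := exists_coe_of_ne_top_of_ne_bot hgx₁ (hgb _)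
  have hle : f x₀ + g (A x₀) ≤ ((a₁ + b₁ : ℝ) : EReal) := by
    simpa [ha₁, hb₁] using hx₀ x₁
  obtain ⟨a, b, ha, hb, -⟩ := exists_coe_of_add_le_coe (hfb _) (hgb _) hle
  exact ⟨x₀, a, b, ha, hb, fun x => by simpa [ha, hb] using hx₀ x⟩

lemma coe_neg_le_conjE_adjoint_add_conjE_neg {x : Euc n} {a b : ℝ} (ha : f x = a)
    (hb : g (A x) = b) (p : Euc m) :
    ((-(a + b) : ℝ) : EReal) ≤
      conjE f (ContinuousLinearMap.adjoint A p) + conjE g (-p) := by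
  have hsplit : -(a + b) = (⟪ContinuousLinearMap.adjoint A p, x⟫ - a) + (⟪-p, A x⟫ - b) := by
    rw [ContinuousLinearMap.adjoint_inner_left, inner_neg_left]
    ring
  rw [hsplit, EReal.coe_add]
  exact add_le_add (coe_inner_sub_le_conjE ha _) (coe_inner_sub_le_conjE hb _)

lemma exists_conjE_adjoint_add_conjE_neg_le (hfb : ∀ x, f x ≠ ⊥) (hgb : ∀ y, g y ≠ ⊥)
    (hfc : IsConvexFn f) (hgc : IsConvexFn g) (hfl : LowerSemicontinuous f)
    (hgl : LowerSemicontinuous g) (hfd : Bornology.IsBounded {x | f x ≠ ⊤})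
    {x₀ : Euc n} {r : ℝ} (hr : f x₀ + g (A x₀) ≤ r) (hmin : ∀ x, (r : EReal) ≤ f x + g (A x))
    {t : ℝ} (htr : t < r) :
    ∃ p, conjE f (ContinuousLinearMap.adjoint A p) + conjE g (-p) ≤ ((-t : ℝ) : EReal) := by
  have hr_mem : ((0 : Euc m), r) ∈ valueEpigraph f g A := ⟨x₀, by simpa using hr⟩
  have ht_mem : ((0 : Euc m), t) ∉ valueEpigraph f g A := by
    rintro ⟨x, hx⟩
    have := (hmin x).trans (by simpa using hx)
    exact htr.not_ge (by exact_mod_cast this)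
  obtain ⟨p, hp⟩ := (convex_valueEpigraph hfb hgb hfc hgc).exists_lt_inner_add_of_notMem
    (isClosed_valueEpigraph hfb hgb hfl hgl hfd) hr_mem ht_mem htr
  refine ⟨p, conjE_add_conjE_le hfb hgb fun x y a b ha hb => ?_⟩
  have := hp (y - A x, a + b) ⟨x, by simp [ha, hb, ← EReal.coe_add]⟩
  rw [inner_sub_right, ← ContinuousLinearMap.adjoint_inner_left] at this
  rw [inner_neg_left]
  linarith

end Duality

/-- Strong duality: `v(P) = v(D)` is finite and the primal problem attains its infimum. -/
theorem stmt0 (n m : ℕ) (f : Euc n → EReal) (g : Euc m → EReal)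
    (A : Euc n →L[ℝ] Euc m) (hf : NiceFn f) (hg : NiceFn g)
    (hfeas : ∃ x, f x ≠ ⊤ ∧ g (A x) ≠ ⊤) :
    ∃ r : ℝ,
      (⨅ x, f x + g (A x)) = (r : EReal) ∧
      -(⨅ p, conjE f (ContinuousLinearMap.adjoint A p) + conjE g (-p)) = (r : EReal) ∧
      ∃ xbar : Euc n, f xbar + g (A xbar) = (r : EReal) := by
  obtain ⟨⟨hfb, -⟩, hfc, hfl, hfd⟩ := hf
  obtain ⟨⟨hgb, -⟩, hgc, hgl, -⟩ := hg
  obtain ⟨x₀, a, b, ha, hb, hmin⟩ := exists_primal_minimizer hfb hgb hfl hgl hfd hfeas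
  have hr : f x₀ + g (A x₀) = ((a + b : ℝ) : EReal) := by rw [ha, hb, EReal.coe_add]
  have hdual : (⨅ p, conjE f (ContinuousLinearMap.adjoint A p) + conjE g (-p)) =
      ((-(a + b) : ℝ) : EReal) := by
    refine le_antisymm (EReal.le_of_forall_lt_iff_le.1 fun z hz => ?_)
      (le_iInf (coe_neg_le_conjE_adjoint_add_conjE_neg ha hb))
    obtain ⟨p, hp⟩ := exists_conjE_adjoint_add_conjE_neg_le hfb hgb hfc hgc hfl hgl hfd
      hr.le hmin (t := -z) (by linarith [EReal.coe_lt_coe_iff.1 hz])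
    exact (iInf_le _ p).trans (by simpa using hp)
  refine ⟨a + b, le_antisymm ((iInf_le _ x₀).trans hr.le) (le_iInf hmin), ?_, x₀, hr⟩
  rw [hdual, EReal.coe_neg, neg_neg]
end
end

section
/- For all ρ > 0, μ > 0 and all p ∈ ℝ^m it holds θ_{ρ,μ}(p) ≤ θ(p) ≤ θ_{ρ,μ}(p) + ρ D_f + μ D_g. -/
open scoped RealInnerProductSpace
noncomputable section

lemma dsup_props {k : ℕ} (f : Euc k → EReal) (hf : NiceFn f) :
    0 ≤ Dsup f ∧ ∀ x, f x ≠ ⊤ → ‖x‖ ^ 2 / 2 ≤ Dsup f := by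
  obtain ⟨⟨hbot, x0, hx0⟩, _, _, hbdd⟩ := hf
  obtain ⟨R, hR⟩ := hbdd.exists_norm_le
  have hba : BddAbove ((fun x : Euc k => ‖x‖ ^ 2 / 2) '' {x | f x ≠ ⊤}) := by
    refine ⟨R ^ 2 / 2, ?_⟩
    rintro y ⟨x, hx, rfl⟩
    have := hR x hx
    have h0 : (0:ℝ) ≤ ‖x‖ := norm_nonneg x
    nlinarith
  have hmem : ∀ x, f x ≠ ⊤ → ‖x‖ ^ 2 / 2 ≤ Dsup f := fun x hx =>
    le_csSup hba ⟨x, hx, rfl⟩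
  refine ⟨le_trans (by positivity) (hmem x0 hx0), hmem⟩

lemma key_lemma {k : ℕ} (f : Euc k → EReal) (hf : NiceFn f) (r : ℝ) (hr : 0 < r)
    (q : Euc k) :
    conjSm f r q ≤ conjFn f q ∧ conjFn f q ≤ conjSm f r q + r * Dsup f := by
  obtain ⟨hD0, hDb⟩ := dsup_props f hf
  obtain ⟨⟨hbot, x0, hx0⟩, _, _, _⟩ := hf
  set S : EReal := ⨆ x, ((⟪q, x⟫ : ℝ) : EReal) - f x with hS
  set T : EReal := ⨆ x, ((⟪q, x⟫ - r / 2 * ‖x‖ ^ 2 : ℝ) : EReal) - f x with hT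
  have hrD : (0:ℝ) ≤ r * Dsup f := mul_nonneg hr.le hD0
  have hTS : T ≤ S := by
    refine iSup_mono fun x => EReal.sub_le_sub ?_ le_rfl
    have : (⟪q, x⟫ - r / 2 * ‖x‖ ^ 2 : ℝ) ≤ ⟪q, x⟫ := by nlinarith [sq_nonneg ‖x‖]
    exact_mod_cast this
  have hST : S ≤ T + ((r * Dsup f : ℝ) : EReal) := by
    refine iSup_le fun x => ?_
    by_cases hx : f x = ⊤
    · simp [hx]
    · obtain ⟨c, hc⟩ : ∃ c : ℝ, f x = (c : EReal) := ⟨_, (EReal.coe_toReal hx (hbot x)).symm⟩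
      have h1 : ((⟪q, x⟫ - r / 2 * ‖x‖ ^ 2 : ℝ) : EReal) - f x ≤ T :=
        le_iSup (fun x => ((⟪q, x⟫ - r / 2 * ‖x‖ ^ 2 : ℝ) : EReal) - f x) x
      have h2 : (r / 2 * ‖x‖ ^ 2 : ℝ) ≤ r * Dsup f := by
        have := hDb x hx
        nlinarith
      calc ((⟪q, x⟫ : ℝ) : EReal) - f x
          = (((⟪q, x⟫ - r / 2 * ‖x‖ ^ 2 - c) + r / 2 * ‖x‖ ^ 2 : ℝ) : EReal) := by
            rw [hc, ← EReal.coe_sub]; congr 1; ring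
        _ = (((⟪q, x⟫ - r / 2 * ‖x‖ ^ 2 : ℝ) : EReal) - f x) + ((r / 2 * ‖x‖ ^ 2 : ℝ) : EReal) := by
            rw [hc, ← EReal.coe_sub, ← EReal.coe_add]
        _ ≤ T + ((r * Dsup f : ℝ) : EReal) := add_le_add h1 (by exact_mod_cast h2)
  obtain ⟨c0, hc0⟩ : ∃ c : ℝ, f x0 = (c : EReal) := ⟨_, (EReal.coe_toReal hx0 (hbot x0)).symm⟩
  have hTbot : T ≠ ⊥ := by
    intro h
    have h1 : ((⟪q, x0⟫ - r / 2 * ‖x0‖ ^ 2 : ℝ) : EReal) - f x0 ≤ T :=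
      le_iSup (fun x => ((⟪q, x⟫ - r / 2 * ‖x‖ ^ 2 : ℝ) : EReal) - f x) x0
    rw [h, le_bot_iff, hc0, ← EReal.coe_sub] at h1
    exact EReal.coe_ne_bot _ h1
  have hSbot : S ≠ ⊥ := by
    intro h
    have h1 : ((⟪q, x0⟫ : ℝ) : EReal) - f x0 ≤ S :=
      le_iSup (fun x => ((⟪q, x⟫ : ℝ) : EReal) - f x) x0
    rw [h, le_bot_iff, hc0, ← EReal.coe_sub] at h1
    exact EReal.coe_ne_bot _ h1
  have eT : conjSm f r q = T.toReal := rfl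
  have eS : conjFn f q = S.toReal := rfl
  rw [eT, eS]
  by_cases hTtop : T = ⊤
  · have hStop : S = ⊤ := top_le_iff.mp (hTtop ▸ hTS)
    rw [hTtop, hStop]
    simp [hrD]
  · have hne : T + ((r * Dsup f : ℝ) : EReal) ≠ ⊤ :=
      (EReal.add_lt_top hTtop (EReal.coe_ne_top _)).ne
    have hSt : S ≠ ⊤ := fun h => hne (top_le_iff.mp (h ▸ hST))
    refine ⟨EReal.toReal_le_toReal hTS hTbot hSt, ?_⟩
    have h3 := EReal.toReal_le_toReal hST hSbot hne
    rwa [EReal.toReal_add hTtop hTbot (EReal.coe_ne_top _) (EReal.coe_ne_bot _),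
      EReal.toReal_coe] at h3

/-- `θ_{ρ,μ}(p) ≤ θ(p) ≤ θ_{ρ,μ}(p) + ρ D_f + μ D_g` for all `p`. -/
theorem stmt4 (n m : ℕ) (f : Euc n → EReal) (g : Euc m → EReal)
    (A : Euc n →L[ℝ] Euc m) (hf : NiceFn f) (hg : NiceFn g)
    (ρ μ : ℝ) (hρ : 0 < ρ) (hμ : 0 < μ) :
    ∀ p : Euc m,
      thetaSm f g A ρ μ p ≤ theta f g A p ∧
      theta f g A p ≤ thetaSm f g A ρ μ p + ρ * Dsup f + μ * Dsup g := by
  intro p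
  obtain ⟨h1f, h2f⟩ := key_lemma f hf ρ hρ (ContinuousLinearMap.adjoint A p)
  obtain ⟨h1g, h2g⟩ := key_lemma g hg μ hμ (-p)
  unfold theta thetaSm
  constructor <;> linarith
end
end

section
/- For all ρ > 0, μ > 0 and every p ∈ ℝ^m it holds: |f(x_{ρ,p}) + g(x_{μ,p}) − v(D)| ≤ |⟨p, A x_{ρ,p} − x_{μ,p}⟩| + |v(D) + θ_{ρ,μ}(p)| + ρ D_f + μ D_g. -/
open scoped RealInnerProductSpace
noncomputable section

lemma prox_min_finite {k : ℕ} {f : Euc k → EReal} (hbot : ∀ x, f x ≠ ⊥)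
    (hex : ∃ x, f x ≠ ⊤) {r : ℝ} (hr : 0 ≤ r) {u x0 : Euc k}
    (h0 : ∀ x, proxObj f r u x0 ≤ proxObj f r u x) : ∃ a : ℝ, f x0 = (a : EReal) := by
  obtain ⟨x1, hx1⟩ := hex
  obtain ⟨b, hb⟩ : ∃ b : ℝ, f x1 = (b : EReal) := ⟨(f x1).toReal, (EReal.coe_toReal hx1 (hbot x1)).symm⟩
  have h1 : proxObj f r u x1 = ((b + r / 2 * ‖u - x1‖ ^ 2 : ℝ) : EReal) := by
    rw [proxObj, hb]; norm_cast
  have hle : f x0 ≤ proxObj f r u x0 := by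
    rw [proxObj]
    have : (0 : EReal) ≤ ((r / 2 * ‖u - x0‖ ^ 2 : ℝ) : EReal) := by
      norm_cast; positivity
    exact le_add_of_nonneg_right this
  have htop : f x0 ≠ ⊤ := by
    intro h
    have := hle.trans ((h0 x1).trans_eq h1)
    rw [h] at this
    exact (EReal.coe_ne_top _) (top_le_iff.mp this)
  exact ⟨(f x0).toReal, (EReal.coe_toReal htop (hbot x0)).symm⟩

lemma conjSm_eq {k : ℕ} {f : Euc k → EReal} (hbot : ∀ x, f x ≠ ⊥) {r : ℝ} (hr : 0 < r)
    (q x0 : Euc k)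
    (h0 : ∀ x, proxObj f r (r⁻¹ • q) x0 ≤ proxObj f r (r⁻¹ • q) x)
    {a : ℝ} (ha : f x0 = (a : EReal)) :
    conjSm f r q = ⟪q, x0⟫ - r / 2 * ‖x0‖ ^ 2 - a := by
  set u : Euc k := r⁻¹ • q with hu
  have key : ∀ x : Euc k, ⟪q, x⟫ - r / 2 * ‖x‖ ^ 2 + r / 2 * ‖u - x‖ ^ 2
      = r / 2 * ‖u‖ ^ 2 := by
    intro x
    have hq : ⟪q, x⟫ = r * ⟪u, x⟫ := by
      rw [hu, real_inner_smul_left]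
      field_simp
    have hns : ‖u - x‖ ^ 2 = ‖u‖ ^ 2 - 2 * ⟪u, x⟫ + ‖x‖ ^ 2 := by
      rw [norm_sub_sq_real]
    rw [hq, hns]; ring
  have hsup : (⨆ x, ((⟪q, x⟫ - r / 2 * ‖x‖ ^ 2 : ℝ) : EReal) - f x)
      = ((⟪q, x0⟫ - r / 2 * ‖x0‖ ^ 2 - a : ℝ) : EReal) := by
    apply le_antisymm
    · apply iSup_le
      intro x
      by_cases hx : f x = ⊤
      · rw [hx]
        simp
      · obtain ⟨b, hb⟩ : ∃ b : ℝ, f x = (b : EReal) :=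
          ⟨(f x).toReal, (EReal.coe_toReal hx (hbot x)).symm⟩
        rw [hb, ← EReal.coe_sub, EReal.coe_le_coe_iff]
        have hineq := h0 x
        rw [proxObj, proxObj, ha, hb, ← EReal.coe_add, ← EReal.coe_add,
          EReal.coe_le_coe_iff] at hineq
        have k1 := key x
        have k2 := key x0
        linarith
    · have hle := le_iSup (fun x => ((⟪q, x⟫ - r / 2 * ‖x‖ ^ 2 : ℝ) : EReal) - f x) x0
      rw [ha, ← EReal.coe_sub] at hle
      exact hle
  rw [conjSm, hsup, EReal.toReal_coe]

lemma norm_sq_le_Dsup {k : ℕ} {f : Euc k → EReal}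
    (hb : Bornology.IsBounded {x | f x ≠ ⊤}) {x : Euc k} (hx : f x ≠ ⊤) :
    ‖x‖ ^ 2 / 2 ≤ Dsup f := by
  unfold Dsup
  apply le_csSup
  · obtain ⟨R, hR⟩ := hb.subset_closedBall 0
    refine ⟨R ^ 2 / 2, ?_⟩
    rintro y ⟨z, hz, rfl⟩
    have hzR : ‖z‖ ≤ R := by
      have := hR hz
      simpa [Metric.mem_closedBall] using this
    have : ‖z‖ ^ 2 ≤ R ^ 2 := by nlinarith [norm_nonneg z]
    linarith
  · exact ⟨x, hx, rfl⟩

/-- Primal-dual estimate: `|f(x_{ρ,p}) + g(x_{μ,p}) - v(D)|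
  ≤ |⟨p, ∇θ_{ρ,μ}(p)⟩| + |v(D) + θ_{ρ,μ}(p)| + ρ D_f + μ D_g`. -/
theorem stmt6 (n m : ℕ) (f : Euc n → EReal) (g : Euc m → EReal)
    (A : Euc n →L[ℝ] Euc m) (hf : NiceFn f) (hg : NiceFn g)
    (hfeas : ∃ x, f x ≠ ⊤ ∧ g (A x) ≠ ⊤)
    (ρ μ : ℝ) (hρ : 0 < ρ) (hμ : 0 < μ)
    (xρ : Euc m → Euc n) (xμ : Euc m → Euc m)
    (hxρ : ∀ p : Euc m,
      UniqMin (proxObj f ρ (ρ⁻¹ • (ContinuousLinearMap.adjoint A p))) (xρ p))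
    (hxμ : ∀ p : Euc m, UniqMin (proxObj g μ (-(μ⁻¹ • p))) (xμ p)) :
    ∀ p : Euc m, ∃ a b : ℝ, f (xρ p) = (a : EReal) ∧ g (xμ p) = (b : EReal) ∧
      |a + b - vDual f g A|
        ≤ |⟪p, A (xρ p) - xμ p⟫| + |vDual f g A + thetaSm f g A ρ μ p|
          + ρ * Dsup f + μ * Dsup g := by
  intro p
  obtain ⟨a, ha⟩ := prox_min_finite hf.1.1 hf.1.2 hρ.le (hxρ p).1
  have hμmin : ∀ x, proxObj g μ (μ⁻¹ • (-p)) (xμ p) ≤ proxObj g μ (μ⁻¹ • (-p)) x := by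
    intro x
    have h := (hxμ p).1 x
    rw [smul_neg]
    exact h
  obtain ⟨b, hb⟩ := prox_min_finite hg.1.1 hg.1.2 hμ.le hμmin
  have h1 := conjSm_eq hf.1.1 hρ (ContinuousLinearMap.adjoint A p) (xρ p) (hxρ p).1 ha
  have h2 := conjSm_eq hg.1.1 hμ (-p) (xμ p) hμmin hb
  have hadj : ⟪ContinuousLinearMap.adjoint A p, xρ p⟫ = ⟪p, A (xρ p)⟫ :=
    ContinuousLinearMap.adjoint_inner_left A (xρ p) p
  have hth : thetaSm f g A ρ μ p
      = ⟪p, A (xρ p) - xμ p⟫ - (a + b) - ρ / 2 * ‖xρ p‖ ^ 2 - μ / 2 * ‖xμ p‖ ^ 2 := by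
    rw [thetaSm, h1, h2, hadj, inner_neg_left, inner_sub_right]; ring
  have hDf : ‖xρ p‖ ^ 2 / 2 ≤ Dsup f :=
    norm_sq_le_Dsup hf.2.2.2 (by rw [ha]; exact EReal.coe_ne_top a)
  have hDg : ‖xμ p‖ ^ 2 / 2 ≤ Dsup g :=
    norm_sq_le_Dsup hg.2.2.2 (by rw [hb]; exact EReal.coe_ne_top b)
  refine ⟨a, b, ha, hb, ?_⟩
  have hc : (0:ℝ) ≤ ρ / 2 * ‖xρ p‖ ^ 2 := by positivity
  have hd : (0:ℝ) ≤ μ / 2 * ‖xμ p‖ ^ 2 := by positivity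
  have hρD : ρ / 2 * ‖xρ p‖ ^ 2 ≤ ρ * Dsup f := by nlinarith
  have hμD : μ / 2 * ‖xμ p‖ ^ 2 ≤ μ * Dsup g := by nlinarith
  set I := ⟪p, A (xρ p) - xμ p⟫
  set V := vDual f g A
  set T := thetaSm f g A ρ μ p
  apply abs_le.mpr
  constructor <;>
    nlinarith [le_abs_self I, neg_abs_le I, le_abs_self (V + T), neg_abs_le (V + T)]
end
end

section
/- For all ρ > 0, μ > 0 and κ > 0, the function θ_{ρ,μ,κ} is strongly convex with modulus κ, possesses a unique global minimizer p_DS* on ℝ^m, is differentiable with gradient ∇θ_{ρ,μ,κ}(p) = A x_{ρ,p} − x_{μ,p} + κ p for every p ∈ ℝ^m, and this gradient is Lipschitz continuous with constant L(ρ,μ,κ) = ‖A‖²/ρ + 1/μ + κ. -/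
open scoped RealInnerProductSpace
noncomputable section

/-! The prox point `x` of a proper convex `f` at `q / r` is where the supremum defining
`f_r*(q)` is attained, and since the prox objective is `r`-strongly convex the prox map is firmly
nonexpansive. Hence `f_r*(q') - f_r*(q)` lies between `⟪q' - q, x⟫` and
`⟪q' - q, x⟫ + ‖q' - q‖² / r`. Summing these bounds for `f_ρ* ∘ A*` and `g_μ* ∘ (-·)` and adding
`(κ/2)‖p‖²` traps `θ_{ρ,μ,κ}(q)` between `θ_{ρ,μ,κ}(p) + ⟪G p, q - p⟫ + (κ/2)‖q - p‖²` and the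
same expression with a larger quadratic term, where `G p = A x_{ρ,p} - x_{μ,p} + κ p`. The lower
bound gives strong convexity, coercivity and hence a unique minimizer; the two bounds together
give `∇θ_{ρ,μ,κ} = G`; and the nonexpansiveness of the prox maps gives the Lipschitz constant
of `G`. -/

open Filter Topology ContinuousLinearMap

theorem StrongConvexOn.add_sq_le_of_isMinOn {E : Type*} [NormedAddCommGroup E]
    [NormedSpace ℝ E] {s : Set E} {m : ℝ} {φ : E → ℝ} {x z : E} (hφ : StrongConvexOn s m φ)
    (hmin : IsMinOn φ s x) (hx : x ∈ s) (hz : z ∈ s) :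
    φ x + m / 2 * ‖z - x‖ ^ 2 ≤ φ z := by
  have hlim : Tendsto (fun t : ℝ => φ x + (1 - t) * (m / 2 * ‖z - x‖ ^ 2)) (𝓝[>] 0)
      (𝓝 (φ x + m / 2 * ‖z - x‖ ^ 2)) := by
    refine Tendsto.mono_left ?_ nhdsWithin_le_nhds
    exact (by fun_prop : Continuous fun t : ℝ => φ x + (1 - t) * (m / 2 * ‖z - x‖ ^ 2)).tendsto'
      0 _ (by simp)
  refine le_of_tendsto hlim ?_
  filter_upwards [Ioo_mem_nhdsGT one_pos] with t ⟨ht0, ht1⟩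
  have hconv := hφ.2 hz hx ht0.le (sub_nonneg.2 ht1.le) (add_sub_cancel t 1)
  have hxmin := hmin (hφ.1 hz hx ht0.le (sub_nonneg.2 ht1.le) (add_sub_cancel t 1))
  simp only [smul_eq_mul, Set.mem_ofPred_eq] at hconv hxmin
  nlinarith

section FirstOrderBounds

variable {E : Type*} [NormedAddCommGroup E] [InnerProductSpace ℝ E] {φ : E → ℝ} {G : E → E}
  {m : ℝ}

theorem half_sq_norm_eq_add_inner (κ : ℝ) (p q : E) :
    κ / 2 * ‖q‖ ^ 2 = κ / 2 * ‖p‖ ^ 2 + ⟪κ • p, q - p⟫ + κ / 2 * ‖q - p‖ ^ 2 := by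
  rw [real_inner_smul_left, inner_sub_right, real_inner_self_eq_norm_sq, norm_sub_sq_real,
    real_inner_comm]
  ring

theorem inner_sub_half_sq_eq {r : ℝ} (hr : r ≠ 0) (q x : E) :
    ⟪q, x⟫ - r / 2 * ‖x‖ ^ 2 = ‖q‖ ^ 2 / (2 * r) - r / 2 * ‖r⁻¹ • q - x‖ ^ 2 := by
  rw [norm_sub_sq_real, norm_smul, real_inner_smul_left, Real.norm_eq_abs, mul_pow, sq_abs]
  field_simp
  ring

theorem strongConvexOn_univ_of_add_inner_add_sq_le
    (hlow : ∀ p q, φ p + ⟪G p, q - p⟫ + m / 2 * ‖q - p‖ ^ 2 ≤ φ q) :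
    StrongConvexOn Set.univ m φ := by
  refine ⟨convex_univ, fun x _ y _ a b ha hb hab => ?_⟩
  obtain rfl : b = 1 - a := eq_sub_of_add_eq' hab
  set z := a • x + (1 - a) • y
  have hxz : x - z = (1 - a) • (x - y) := by simp only [z]; module
  have hyz : y - z = (-a) • (x - y) := by simp only [z]; module
  have hx := hlow z x
  have hy := hlow z y
  rw [hxz, real_inner_smul_right, norm_smul, mul_pow, Real.norm_eq_abs, sq_abs] at hx
  rw [hyz, real_inner_smul_right, norm_smul, mul_pow, Real.norm_eq_abs, sq_abs] at hy
  simp only [smul_eq_mul]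
  nlinarith [mul_le_mul_of_nonneg_left hx ha, mul_le_mul_of_nonneg_left hy hb]

theorem hasGradientAt_of_abs_sub_inner_le [CompleteSpace E] {p g : E} {C : ℝ}
    (h : ∀ᶠ q in 𝓝 p, |φ q - φ p - ⟪g, q - p⟫| ≤ C * ‖q - p‖ ^ 2) : HasGradientAt φ g p := by
  rw [hasGradientAt_iff_isLittleO]
  have hsq : (fun q => ‖q - p‖ ^ 2) =o[𝓝 p] fun q => q - p :=
    (Asymptotics.isLittleO_norm_pow_id one_lt_two).comp_tendsto
      (tendsto_sub_nhds_zero_iff.2 tendsto_id)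
  refine (Asymptotics.IsBigO.of_bound C ?_).trans_isLittleO hsq
  filter_upwards [h] with q hq
  simpa only [Real.norm_eq_abs, abs_pow, abs_norm] using hq

theorem existsUnique_forall_le_of_add_inner_add_sq_le [ProperSpace E] (hm : 0 < m)
    (hφ : Continuous φ) (hlow : ∀ p q, φ p + ⟪G p, q - p⟫ + m / 2 * ‖q - p‖ ^ 2 ≤ φ q) :
    ∃! p, ∀ q, φ p ≤ φ q := by
  have hcoercive : ∀ᶠ q in cocompact E, φ 0 ≤ φ q := by
    filter_upwards [tendsto_norm_cocompact_atTop.eventually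
      (eventually_ge_atTop (2 * ‖G 0‖ / m))] with q hq
    have hcs := real_inner_le_norm (G 0) (-q)
    rw [inner_neg_right, norm_neg] at hcs
    have hgrow : ‖G 0‖ * ‖q‖ ≤ m / 2 * ‖q‖ ^ 2 := by
      have hq' : ‖G 0‖ ≤ m / 2 * ‖q‖ := by
        rw [div_le_iff₀ hm] at hq; linarith
      nlinarith [norm_nonneg q]
    have hlow₀ := hlow 0 q
    simp only [sub_zero] at hlow₀
    linarith
  obtain ⟨p, hp⟩ := hφ.exists_forall_le' 0 hcoercive
  have hstrict := (strongConvexOn_univ_of_add_inner_add_sq_le hlow).strictConvexOn hm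
  exact ⟨p, hp, fun q hq => hstrict.eq_of_isMinOn (fun z _ => hq z) (fun z _ => hp z)
    (Set.mem_univ q) (Set.mem_univ p)⟩

end FirstOrderBounds

section Prox

variable {k : ℕ} {f : Euc k → EReal} {r : ℝ} {u x₀ : Euc k}

theorem UniqMin.proxObj_ne_top (hf : IsProperFn f) (h : UniqMin (proxObj f r u) x₀) :
    f x₀ ≠ ⊤ := by
  obtain ⟨z, hz⟩ := hf.2
  intro htop
  have hle := h.1 z
  rw [proxObj, proxObj, htop, EReal.top_add_coe] at hle
  exact not_top_lt (hle.trans_lt (EReal.add_lt_top hz (EReal.coe_ne_top _)))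

theorem UniqMin.proxObj_toReal_le (hf : IsProperFn f) (h : UniqMin (proxObj f r u) x₀)
    {z : Euc k} (hz : f z ≠ ⊤) :
    (f x₀).toReal + r / 2 * ‖u - x₀‖ ^ 2 ≤ (f z).toReal + r / 2 * ‖u - z‖ ^ 2 := by
  have hle := h.1 z
  rw [proxObj, proxObj, ← EReal.coe_toReal (h.proxObj_ne_top hf) (hf.1 x₀),
    ← EReal.coe_toReal hz (hf.1 z), ← EReal.coe_add, ← EReal.coe_add,
    EReal.coe_le_coe_iff] at hle
  exact hle

theorem IsConvexFn.convexOn_toReal (hbot : ∀ x, f x ≠ ⊥) (hf : IsConvexFn f) :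
    ConvexOn ℝ {x | f x ≠ ⊤} fun x => (f x).toReal := by
  have hmix : ∀ ⦃x⦄, f x ≠ ⊤ → ∀ ⦃y⦄, f y ≠ ⊤ → ∀ ⦃a b : ℝ⦄, 0 < a → 0 < b → a + b = 1 →
      f (a • x + b • y) ≤ ((a * (f x).toReal + b * (f y).toReal : ℝ) : EReal) := by
    intro x hx y hy a b ha hb hab
    obtain rfl : b = 1 - a := eq_sub_of_add_eq' hab
    have := hf x y a ha (by linarith)
    rwa [← EReal.coe_toReal hx (hbot x), ← EReal.coe_toReal hy (hbot y), ← EReal.coe_mul,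
      ← EReal.coe_mul, ← EReal.coe_add] at this
  refine convexOn_iff_forall_pos.2 ⟨convex_iff_forall_pos.2 ?_, ?_⟩
  · intro x hx y hy a b ha hb hab
    exact ne_top_of_le_ne_top (EReal.coe_ne_top _) (hmix hx hy ha hb hab)
  · intro x hx y hy a b ha hb hab
    have hxy := hmix hx hy ha hb hab
    rw [← EReal.coe_le_coe_iff, EReal.coe_toReal (ne_top_of_le_ne_top (EReal.coe_ne_top _) hxy)
      (hbot _)]
    exact hxy

theorem UniqMin.proxObj_add_sq_le (hf : IsProperFn f) (hconv : IsConvexFn f)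
    (h : UniqMin (proxObj f r u) x₀) {z : Euc k} (hz : f z ≠ ⊤) :
    (f x₀).toReal + r / 2 * ‖u - x₀‖ ^ 2 + r / 2 * ‖z - x₀‖ ^ 2
      ≤ (f z).toReal + r / 2 * ‖u - z‖ ^ 2 := by
  have hdom : ConvexOn ℝ {x | f x ≠ ⊤} fun x => (f x).toReal := hconv.convexOn_toReal hf.1
  have hstrong : StrongConvexOn {x | f x ≠ ⊤} r fun x => (f x).toReal + r / 2 * ‖u - x‖ ^ 2 := by
    rw [strongConvexOn_iff_convex]
    refine (hdom.add (((innerₗ (Euc k) (-r • u)).convexOn hdom.1).add_const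
      (r / 2 * ‖u‖ ^ 2))).congr fun x _ => ?_
    simp only [Pi.add_apply, innerₗ_apply_apply, real_inner_smul_left, norm_sub_sq_real u x]
    ring
  exact hstrong.add_sq_le_of_isMinOn (fun z hz => h.proxObj_toReal_le hf hz)
    (h.proxObj_ne_top hf) hz

theorem UniqMin.proxObj_sq_norm_sub_le_inner (hf : IsProperFn f) (hconv : IsConvexFn f)
    (hr : 0 < r) (h₀ : UniqMin (proxObj f r u) x₀) (h₁ : UniqMin (proxObj f r u') x₁) :
    ‖x₁ - x₀‖ ^ 2 ≤ ⟪u' - u, x₁ - x₀⟫ := by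
  have e₀ := h₀.proxObj_add_sq_le hf hconv (h₁.proxObj_ne_top hf)
  have e₁ := h₁.proxObj_add_sq_le hf hconv (h₀.proxObj_ne_top hf)
  rw [show u - x₁ = (u - x₀) - (x₁ - x₀) by abel, norm_sub_sq_real (u - x₀)] at e₀
  rw [show u' - x₀ = (u' - x₁) + (x₁ - x₀) by abel, norm_add_sq_real (u' - x₁),
    norm_sub_rev x₀] at e₁
  have hsplit : ⟪u' - u, x₁ - x₀⟫ = ⟪u' - x₁, x₁ - x₀⟫ - ⟪u - x₀, x₁ - x₀⟫ + ‖x₁ - x₀‖ ^ 2 := by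
    rw [← real_inner_self_eq_norm_sq, ← inner_sub_left, ← inner_add_left]
    congr 1
    abel
  nlinarith

theorem UniqMin.proxObj_norm_sub_le (hf : IsProperFn f) (hconv : IsConvexFn f)
    (hr : 0 < r) (h₀ : UniqMin (proxObj f r u) x₀) (h₁ : UniqMin (proxObj f r u') x₁) :
    ‖x₁ - x₀‖ ≤ ‖u' - u‖ := by
  have hfirm := h₀.proxObj_sq_norm_sub_le_inner hf hconv hr h₁
  have hcs := real_inner_le_norm (u' - u) (x₁ - x₀)
  nlinarith [norm_nonneg (x₁ - x₀), norm_nonneg (u' - u)]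

end Prox

section SmoothedConjugate

variable {k : ℕ} {f : Euc k → EReal} {r : ℝ} {q q' x₀ x₁ : Euc k}

theorem UniqMin.inner_sub_le_of_proxObj (hf : IsProperFn f) (hr : r ≠ 0)
    (h : UniqMin (proxObj f r (r⁻¹ • q)) x₀) {z : Euc k} (hz : f z ≠ ⊤) :
    ⟪q, z⟫ - r / 2 * ‖z‖ ^ 2 - (f z).toReal ≤ ⟪q, x₀⟫ - r / 2 * ‖x₀‖ ^ 2 - (f x₀).toReal := by
  rw [inner_sub_half_sq_eq hr, inner_sub_half_sq_eq hr]
  linarith [h.proxObj_toReal_le hf hz]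

theorem UniqMin.conjSm_eq (hf : IsProperFn f) (hr : r ≠ 0)
    (h : UniqMin (proxObj f r (r⁻¹ • q)) x₀) :
    conjSm f r q = ⟪q, x₀⟫ - r / 2 * ‖x₀‖ ^ 2 - (f x₀).toReal := by
  have hx₀ : ((⟪q, x₀⟫ - r / 2 * ‖x₀‖ ^ 2 : ℝ) : EReal) - f x₀
      = ((⟪q, x₀⟫ - r / 2 * ‖x₀‖ ^ 2 - (f x₀).toReal : ℝ) : EReal) := by
    rw [← EReal.coe_toReal (h.proxObj_ne_top hf) (hf.1 x₀), ← EReal.coe_sub, EReal.toReal_coe]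
  rw [conjSm, ← EReal.toReal_coe (_ - _), ← hx₀]
  congr 1
  refine le_antisymm (iSup_le fun z => ?_) (le_iSup_of_le x₀ le_rfl)
  by_cases hz : f z = ⊤
  · rw [hz, EReal.sub_top]
    exact bot_le
  · rw [hx₀, ← EReal.coe_toReal hz (hf.1 z), ← EReal.coe_sub, EReal.coe_le_coe_iff]
    exact h.inner_sub_le_of_proxObj hf hr hz

theorem UniqMin.inner_sub_le_conjSm_sub (hf : IsProperFn f) (hr : r ≠ 0)
    (h₀ : UniqMin (proxObj f r (r⁻¹ • q)) x₀) (h₁ : UniqMin (proxObj f r (r⁻¹ • q')) x₁) :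
    ⟪q' - q, x₀⟫ ≤ conjSm f r q' - conjSm f r q := by
  rw [h₀.conjSm_eq hf hr, h₁.conjSm_eq hf hr, inner_sub_left]
  linarith [h₁.inner_sub_le_of_proxObj hf hr (h₀.proxObj_ne_top hf)]

theorem UniqMin.conjSm_sub_le (hf : IsProperFn f) (hconv : IsConvexFn f) (hr : 0 < r)
    (h₀ : UniqMin (proxObj f r (r⁻¹ • q)) x₀) (h₁ : UniqMin (proxObj f r (r⁻¹ • q')) x₁) :
    conjSm f r q' - conjSm f r q ≤ ⟪q' - q, x₀⟫ + ‖q' - q‖ ^ 2 / r := by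
  have hsub := h₁.inner_sub_le_conjSm_sub hf hr.ne' h₀
  have hlip : ‖x₁ - x₀‖ ≤ r⁻¹ * ‖q' - q‖ := by
    simpa only [← smul_sub, norm_smul, Real.norm_eq_abs, abs_of_pos (inv_pos.2 hr)]
      using h₀.proxObj_norm_sub_le hf hconv hr h₁
  have hsplit : ⟪q' - q, x₁⟫ = ⟪q' - q, x₀⟫ + ⟪q' - q, x₁ - x₀⟫ := by
    rw [← inner_add_right, add_sub_cancel]
  have hcs := real_inner_le_norm (q' - q) (x₁ - x₀)
  have hq : ‖q' - q‖ * ‖x₁ - x₀‖ ≤ ‖q' - q‖ ^ 2 / r := by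
    calc ‖q' - q‖ * ‖x₁ - x₀‖ ≤ ‖q' - q‖ * (r⁻¹ * ‖q' - q‖) := by gcongr
      _ = ‖q' - q‖ ^ 2 / r := by ring
  rw [← neg_sub q', inner_neg_left] at hsub
  linarith

end SmoothedConjugate

section DualObjective

variable {n m : ℕ} {f : Euc n → EReal} {g : Euc m → EReal} {A : Euc n →L[ℝ] Euc m}
  {ρ μ κ : ℝ} {xρ : Euc m → Euc n} {xμ : Euc m → Euc m}

theorem thetaSmK_add_inner_add_sq_le (hf : IsProperFn f) (hg : IsProperFn g)
    (hρ : ρ ≠ 0) (hμ : μ ≠ 0)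
    (hxρ : ∀ p, UniqMin (proxObj f ρ (ρ⁻¹ • (adjoint A p))) (xρ p))
    (hxμ : ∀ p, UniqMin (proxObj g μ (-(μ⁻¹ • p))) (xμ p)) (p q : Euc m) :
    thetaSmK f g A ρ μ κ p + ⟪A (xρ p) - xμ p + κ • p, q - p⟫ + κ / 2 * ‖q - p‖ ^ 2
      ≤ thetaSmK f g A ρ μ κ q := by
  have hxμ' (p : Euc m) : UniqMin (proxObj g μ (μ⁻¹ • -p)) (xμ p) := by
    rw [smul_neg]; exact hxμ p
  have hF := (hxρ p).inner_sub_le_conjSm_sub hf hρ (hxρ q)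
  have hG := (hxμ' p).inner_sub_le_conjSm_sub hg hμ (hxμ' q)
  rw [← map_sub, adjoint_inner_left, real_inner_comm] at hF
  rw [neg_sub_neg, ← neg_sub q, inner_neg_left, real_inner_comm] at hG
  simp only [thetaSmK, thetaSm, inner_add_left, inner_sub_left]
  linarith [half_sq_norm_eq_add_inner κ p q]

theorem thetaSmK_le_add_inner_add_sq (hf : IsProperFn f) (hfc : IsConvexFn f)
    (hg : IsProperFn g) (hgc : IsConvexFn g) (hρ : 0 < ρ) (hμ : 0 < μ)
    (hxρ : ∀ p, UniqMin (proxObj f ρ (ρ⁻¹ • (adjoint A p))) (xρ p))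
    (hxμ : ∀ p, UniqMin (proxObj g μ (-(μ⁻¹ • p))) (xμ p)) (p q : Euc m) :
    thetaSmK f g A ρ μ κ q ≤ thetaSmK f g A ρ μ κ p + ⟪A (xρ p) - xμ p + κ • p, q - p⟫
      + (‖A‖ ^ 2 / ρ + 1 / μ + κ / 2) * ‖q - p‖ ^ 2 := by
  have hxμ' (p : Euc m) : UniqMin (proxObj g μ (μ⁻¹ • -p)) (xμ p) := by
    rw [smul_neg]; exact hxμ p
  have hF := (hxρ p).conjSm_sub_le hf hfc hρ (hxρ q)
  have hG := (hxμ' p).conjSm_sub_le hg hgc hμ (hxμ' q)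
  rw [← map_sub, adjoint_inner_left, real_inner_comm] at hF
  rw [neg_sub_neg, ← neg_sub q, inner_neg_left, real_inner_comm, norm_neg] at hG
  have hA : ‖adjoint A (q - p)‖ ^ 2 / ρ ≤ ‖A‖ ^ 2 / ρ * ‖q - p‖ ^ 2 := by
    rw [div_mul_eq_mul_div, ← mul_pow, ← adjoint.norm_map A]
    gcongr
    exact (adjoint A).le_opNorm _
  have hsplit : (‖A‖ ^ 2 / ρ + 1 / μ + κ / 2) * ‖q - p‖ ^ 2
      = ‖A‖ ^ 2 / ρ * ‖q - p‖ ^ 2 + ‖q - p‖ ^ 2 / μ + κ / 2 * ‖q - p‖ ^ 2 := by ring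
  simp only [thetaSmK, thetaSm, inner_add_left, inner_sub_left]
  linarith [half_sq_norm_eq_add_inner κ p q]

theorem lipschitzWith_thetaSmK_gradient (hf : IsProperFn f) (hfc : IsConvexFn f)
    (hg : IsProperFn g) (hgc : IsConvexFn g) (hρ : 0 < ρ) (hμ : 0 < μ) (hκ : 0 ≤ κ)
    (hxρ : ∀ p, UniqMin (proxObj f ρ (ρ⁻¹ • (adjoint A p))) (xρ p))
    (hxμ : ∀ p, UniqMin (proxObj g μ (-(μ⁻¹ • p))) (xμ p)) :
    LipschitzWith (‖A‖ ^ 2 / ρ + 1 / μ + κ).toNNReal (fun p => A (xρ p) - xμ p + κ • p) := by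
  refine LipschitzWith.of_dist_le_mul fun p q => ?_
  rw [Real.coe_toNNReal _ (by positivity), dist_eq_norm, dist_eq_norm]
  have hρL : ‖xρ p - xρ q‖ ≤ ‖A‖ / ρ * ‖p - q‖ := by
    have hprox := (hxρ q).proxObj_norm_sub_le hf hfc hρ (hxρ p)
    rw [← smul_sub, ← map_sub, norm_smul, Real.norm_eq_abs, abs_of_pos (inv_pos.2 hρ)] at hprox
    calc ‖xρ p - xρ q‖ ≤ ρ⁻¹ * ‖adjoint A (p - q)‖ := hprox
      _ ≤ ρ⁻¹ * (‖A‖ * ‖p - q‖) := by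
        gcongr
        rw [← adjoint.norm_map A]
        exact (adjoint A).le_opNorm _
      _ = ‖A‖ / ρ * ‖p - q‖ := by ring
  have hμL : ‖xμ p - xμ q‖ ≤ 1 / μ * ‖p - q‖ := by
    have hprox := (hxμ q).proxObj_norm_sub_le hg hgc hμ (hxμ p)
    rwa [neg_sub_neg, ← smul_sub, norm_smul, Real.norm_eq_abs, abs_of_pos (inv_pos.2 hμ),
      norm_sub_rev q, ← one_div] at hprox
  calc ‖A (xρ p) - xμ p + κ • p - (A (xρ q) - xμ q + κ • q)‖
      = ‖A (xρ p - xρ q) - (xμ p - xμ q) + κ • (p - q)‖ := by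
        rw [map_sub, smul_sub]; abel_nf
    _ ≤ ‖A‖ * ‖xρ p - xρ q‖ + ‖xμ p - xμ q‖ + κ * ‖p - q‖ := by
        refine (norm_add_le _ _).trans (add_le_add ((norm_sub_le _ _).trans ?_) ?_)
        · exact add_le_add_left (A.le_opNorm _) _
        · rw [norm_smul, Real.norm_eq_abs, abs_of_nonneg hκ]
    _ ≤ ‖A‖ * (‖A‖ / ρ * ‖p - q‖) + 1 / μ * ‖p - q‖ + κ * ‖p - q‖ := by gcongr
    _ = (‖A‖ ^ 2 / ρ + 1 / μ + κ) * ‖p - q‖ := by ring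

end DualObjective

/-- Second smoothing: `θ_{ρ,μ,κ}` is strongly convex with modulus `κ`, possesses a unique
global minimizer, is differentiable with gradient `A x_{ρ,p} - x_{μ,p} + κ p`, and this
gradient is Lipschitz continuous with constant `L(ρ,μ,κ) = ‖A‖²/ρ + 1/μ + κ`. -/
theorem stmt8 (n m : ℕ) (f : Euc n → EReal) (g : Euc m → EReal)
    (A : Euc n →L[ℝ] Euc m) (hf : NiceFn f) (hg : NiceFn g)
    (ρ μ κ : ℝ) (hρ : 0 < ρ) (hμ : 0 < μ) (hκ : 0 < κ)
    (xρ : Euc m → Euc n) (xμ : Euc m → Euc m)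
    (hxρ : ∀ p : Euc m,
      UniqMin (proxObj f ρ (ρ⁻¹ • (ContinuousLinearMap.adjoint A p))) (xρ p))
    (hxμ : ∀ p : Euc m, UniqMin (proxObj g μ (-(μ⁻¹ • p))) (xμ p)) :
    (∀ p q : Euc m, ∀ t : ℝ, 0 < t → t < 1 →
      thetaSmK f g A ρ μ κ (t • p + (1 - t) • q)
        ≤ t * thetaSmK f g A ρ μ κ p + (1 - t) * thetaSmK f g A ρ μ κ q
          - κ / 2 * t * (1 - t) * ‖p - q‖ ^ 2) ∧
    (∃! pDS : Euc m, ∀ p, thetaSmK f g A ρ μ κ pDS ≤ thetaSmK f g A ρ μ κ p) ∧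
    (∀ p : Euc m, HasGradientAt (thetaSmK f g A ρ μ κ) (A (xρ p) - xμ p + κ • p) p) ∧
    LipschitzWith (‖A‖ ^ 2 / ρ + 1 / μ + κ).toNNReal
      (fun p => A (xρ p) - xμ p + κ • p) := by
  obtain ⟨hfp, hfc, -, -⟩ := hf
  obtain ⟨hgp, hgc, -, -⟩ := hg
  have hlow := thetaSmK_add_inner_add_sq_le (κ := κ) hfp hgp hρ.ne' hμ.ne' hxρ hxμ
  have hupp := thetaSmK_le_add_inner_add_sq (κ := κ) hfp hfc hgp hgc hρ hμ hxρ hxμ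
  have hgrad (p : Euc m) :
      HasGradientAt (thetaSmK f g A ρ μ κ) (A (xρ p) - xμ p + κ • p) p := by
    refine hasGradientAt_of_abs_sub_inner_le (C := ‖A‖ ^ 2 / ρ + 1 / μ + κ / 2)
      (Eventually.of_forall fun q => abs_le.2 ⟨?_, by linarith [hupp p q]⟩)
    nlinarith [hlow p q, sq_nonneg ‖q - p‖,
      (by positivity : 0 ≤ ‖A‖ ^ 2 / ρ + 1 / μ + κ / 2)]
  have hcont : Continuous (thetaSmK f g A ρ μ κ) :=
    continuous_iff_continuousAt.2 fun p => (hgrad p).continuousAt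
  refine ⟨fun p q t ht₀ ht₁ => ?_,
    existsUnique_forall_le_of_add_inner_add_sq_le hκ hcont hlow, hgrad,
    lipschitzWith_thetaSmK_gradient hfp hfc hgp hgc hρ hμ hκ.le hxρ hxμ⟩
  have hconv := (strongConvexOn_univ_of_add_inner_add_sq_le hlow).2 (Set.mem_univ p)
    (Set.mem_univ q) ht₀.le (sub_nonneg.2 ht₁.le) (add_sub_cancel t 1)
  simp only [smul_eq_mul] at hconv
  linarith
end
end

section
/- For all ρ > 0, μ > 0 and κ > 0, if p* is an optimal solution of the dual problem (a minimizer of θ over ℝ^m) and p_DS* is the unique minimizer of θ_{ρ,μ,κ}, then θ_{ρ,μ}(0) − θ_{ρ,μ}(p_DS*) ≤ θ(0) − θ(p*) + ρ D_f + μ D_g. -/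
open scoped RealInnerProductSpace
noncomputable section

/-! Smoothing by `(r/2)‖x‖²` changes the conjugate of `f` by at most `r D_f`, since `‖x‖²/2 ≤ D_f`
on `dom f`. So `θ_{ρ,μ} ≤ θ ≤ θ_{ρ,μ} + ρ D_f + μ D_g` everywhere, and together with
`θ(p*) ≤ θ(p_DS*)` this gives the bound. Lower semicontinuity and the bounded
domain make `f` bounded below, which keeps all the suprema finite, so `toReal` loses nothing. -/

section Conjugate

variable {k : ℕ} {f : Euc k → EReal} (hf : IsProperFn f)
include hf

lemma IsProperFn.exists_coe_le (hlsc : LowerSemicontinuous f)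
    (hbdd : Bornology.IsBounded {x | f x ≠ ⊤}) : ∃ c : ℝ, ∀ x, (c : EReal) ≤ f x := by
  obtain ⟨hbot, x₁, hx₁⟩ := hf
  obtain ⟨a, -, ha⟩ := (hlsc.lowerSemicontinuousOn _).exists_isMinOn
    ⟨x₁, subset_closure hx₁⟩ hbdd.isCompact_closure
  have ha_top : f a ≠ ⊤ := ((ha (subset_closure hx₁)).trans_lt hx₁.lt_top).ne
  refine ⟨(f a).toReal, fun x => ?_⟩
  by_cases hx : f x = ⊤
  · simp [hx]
  · rw [EReal.coe_toReal ha_top (hbot a)]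
    exact ha (subset_closure hx)

lemma IsProperFn.iSup_coe_sub_ne_bot (φ : Euc k → ℝ) :
    (⨆ x, (φ x : EReal) - f x) ≠ ⊥ := by
  obtain ⟨x₁, hx₁⟩ := hf.2
  refine ne_bot_of_le_ne_bot ?_ (le_iSup (fun x => (φ x : EReal) - f x) x₁)
  rw [← EReal.coe_toReal hx₁ (hf.1 x₁)]
  exact EReal.coe_ne_bot _

lemma IsProperFn.iSup_coe_sub_ne_top (hlsc : LowerSemicontinuous f)
    (hbdd : Bornology.IsBounded {x | f x ≠ ⊤}) (φ : Euc k → ℝ) {M : ℝ}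
    (hM : ∀ x, f x ≠ ⊤ → φ x ≤ M) : (⨆ x, (φ x : EReal) - f x) ≠ ⊤ := by
  obtain ⟨c, hc⟩ := hf.exists_coe_le hlsc hbdd
  refine ne_top_of_le_ne_top (EReal.coe_ne_top (M - c)) (iSup_le fun x => ?_)
  by_cases hx : f x = ⊤
  · simp [hx]
  · have hcx := hc x
    rw [← EReal.coe_toReal hx (hf.1 x)] at hcx ⊢
    norm_cast at hcx ⊢
    linarith [hM x hx]

lemma IsProperFn.toReal_iSup_coe_sub_le (hlsc : LowerSemicontinuous f)
    (hbdd : Bornology.IsBounded {x | f x ≠ ⊤}) {φ ψ : Euc k → ℝ} {C M : ℝ}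
    (hψ : ∀ x, f x ≠ ⊤ → ψ x ≤ M) (hφψ : ∀ x, f x ≠ ⊤ → φ x ≤ ψ x + C) :
    (⨆ x, (φ x : EReal) - f x).toReal ≤ (⨆ x, (ψ x : EReal) - f x).toReal + C := by
  have hψ_top := hf.iSup_coe_sub_ne_top hlsc hbdd ψ hψ
  have hle : (⨆ x, (φ x : EReal) - f x) ≤ (⨆ x, (ψ x : EReal) - f x) + C := by
    refine iSup_le fun x => ?_
    by_cases hx : f x = ⊤
    · simp [hx]
    · calc (φ x : EReal) - f x ≤ ((ψ x : EReal) - f x) + C := by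
            rw [← EReal.coe_toReal hx (hf.1 x)]
            norm_cast
            linarith [hφψ x hx]
        _ ≤ _ := by gcongr; exact le_iSup (fun x => (ψ x : EReal) - f x) x
  calc (⨆ x, (φ x : EReal) - f x).toReal
      ≤ ((⨆ x, (ψ x : EReal) - f x) + C).toReal :=
        EReal.toReal_le_toReal hle (hf.iSup_coe_sub_ne_bot φ)
          (EReal.add_ne_top hψ_top (EReal.coe_ne_top C))
    _ = _ := by
        rw [EReal.toReal_add hψ_top (hf.iSup_coe_sub_ne_bot ψ) (EReal.coe_ne_top C)
          (EReal.coe_ne_bot C), EReal.toReal_coe]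

omit hf in
lemma half_sq_norm_le_Dsup (hbdd : Bornology.IsBounded {x | f x ≠ ⊤}) {x : Euc k}
    (hx : f x ≠ ⊤) : ‖x‖ ^ 2 / 2 ≤ Dsup f := by
  obtain ⟨R, hR⟩ := isBounded_iff_forall_norm_le.1 hbdd
  refine le_csSup ⟨R ^ 2 / 2, ?_⟩ ⟨x, hx, rfl⟩
  rintro _ ⟨z, hz, rfl⟩
  nlinarith [hR z hz, norm_nonneg z]

omit hf in
lemma exists_inner_le_of_isBounded (hbdd : Bornology.IsBounded {x | f x ≠ ⊤}) (q : Euc k) :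
    ∃ M, ∀ x, f x ≠ ⊤ → ⟪q, x⟫ ≤ M := by
  obtain ⟨R, hR⟩ := isBounded_iff_forall_norm_le.1 hbdd
  exact ⟨‖q‖ * R, fun x hx =>
    (real_inner_le_norm q x).trans (mul_le_mul_of_nonneg_left (hR x hx) (norm_nonneg q))⟩

lemma IsProperFn.conjSm_le_conjFn (hlsc : LowerSemicontinuous f)
    (hbdd : Bornology.IsBounded {x | f x ≠ ⊤}) {r : ℝ} (hr : 0 ≤ r) (q : Euc k) :
    conjSm f r q ≤ conjFn f q := by
  obtain ⟨M, hM⟩ := exists_inner_le_of_isBounded hbdd q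
  have h := hf.toReal_iSup_coe_sub_le hlsc hbdd (φ := fun x => ⟪q, x⟫ - r / 2 * ‖x‖ ^ 2)
    (C := 0) hM fun x _ => by nlinarith [sq_nonneg ‖x‖]
  rwa [add_zero] at h

lemma IsProperFn.conjFn_le_conjSm_add (hlsc : LowerSemicontinuous f)
    (hbdd : Bornology.IsBounded {x | f x ≠ ⊤}) {r : ℝ} (hr : 0 ≤ r) (q : Euc k) :
    conjFn f q ≤ conjSm f r q + r * Dsup f := by
  obtain ⟨M, hM⟩ := exists_inner_le_of_isBounded hbdd q
  refine hf.toReal_iSup_coe_sub_le hlsc hbdd (M := M) (fun x hx => ?_) fun x hx => ?_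
  · nlinarith [hM x hx, sq_nonneg ‖x‖]
  · nlinarith [half_sq_norm_le_Dsup hbdd hx]

end Conjugate

section DualObjective

variable {n m : ℕ} {f : Euc n → EReal} {g : Euc m → EReal} {ρ μ : ℝ}

lemma thetaSm_le_theta (hf : NiceFn f) (hg : NiceFn g) (hρ : 0 ≤ ρ) (hμ : 0 ≤ μ)
    (A : Euc n →L[ℝ] Euc m) (p : Euc m) : thetaSm f g A ρ μ p ≤ theta f g A p :=
  add_le_add (hf.1.conjSm_le_conjFn hf.2.2.1 hf.2.2.2 hρ _)
    (hg.1.conjSm_le_conjFn hg.2.2.1 hg.2.2.2 hμ _)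

lemma theta_le_thetaSm_add (hf : NiceFn f) (hg : NiceFn g) (hρ : 0 ≤ ρ) (hμ : 0 ≤ μ)
    (A : Euc n →L[ℝ] Euc m) (p : Euc m) :
    theta f g A p ≤ thetaSm f g A ρ μ p + ρ * Dsup f + μ * Dsup g := by
  have hf' := hf.1.conjFn_le_conjSm_add hf.2.2.1 hf.2.2.2 hρ (ContinuousLinearMap.adjoint A p)
  have hg' := hg.1.conjFn_le_conjSm_add hg.2.2.1 hg.2.2.2 hμ (-p)
  unfold theta thetaSm
  linarith

end DualObjective

theorem stmt10_general (n m : ℕ) (f : Euc n → EReal) (g : Euc m → EReal)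
    (A : Euc n →L[ℝ] Euc m) (hf : NiceFn f) (hg : NiceFn g)
    (ρ μ : ℝ) (hρ : 0 < ρ) (hμ : 0 < μ)
    (pstar : Euc m) (hpstar : ∀ p, theta f g A pstar ≤ theta f g A p)
    (pDS : Euc m) :
    thetaSm f g A ρ μ 0 - thetaSm f g A ρ μ pDS
      ≤ theta f g A 0 - theta f g A pstar + ρ * Dsup f + μ * Dsup g := by
  have h_zero := thetaSm_le_theta hf hg hρ.le hμ.le A 0
  have h_pDS := theta_le_thetaSm_add hf hg hρ.le hμ.le A pDS
  linarith [hpstar pDS]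

/-- `θ_{ρ,μ}(0) - θ_{ρ,μ}(p_DS*) ≤ θ(0) - θ(p*) + ρ D_f + μ D_g`. -/
theorem stmt10 (n m : ℕ) (f : Euc n → EReal) (g : Euc m → EReal)
    (A : Euc n →L[ℝ] Euc m) (hf : NiceFn f) (hg : NiceFn g)
    (ρ μ κ : ℝ) (hρ : 0 < ρ) (hμ : 0 < μ) (hκ : 0 < κ)
    (pstar : Euc m) (hpstar : ∀ p, theta f g A pstar ≤ theta f g A p)
    (pDS : Euc m) (hpDS : UniqMin (thetaSmK f g A ρ μ κ) pDS) :
    thetaSm f g A ρ μ 0 - thetaSm f g A ρ μ pDS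
      ≤ theta f g A 0 - theta f g A pstar + ρ * Dsup f + μ * Dsup g :=
  stmt10_general n m f g A hf hg ρ μ hρ hμ pstar hpstar pDS
end
end

section
/- Let ρ > 0, μ > 0, κ > 0, let p_DS* be the unique minimizer of θ_{ρ,μ,κ}, and set E := θ_{ρ,μ}(0) − θ_{ρ,μ}(p_DS*). If p ∈ ℝ^m and t ≥ 0 satisfy θ_{ρ,μ,κ}(p) − θ_{ρ,μ,κ}(p_DS*) ≤ E·e^{−t} and ‖p − p_DS*‖² ≤ min{‖p_DS*‖², (2/κ)·E·e^{−t}}, then θ_{ρ,μ}(p) − θ_{ρ,μ}(p_DS*) ≤ (25/8)·E·e^{−t/2}. -/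
open scoped RealInnerProductSpace
noncomputable section

/-!
Comparing `p_DS*` with `0` in `θ_{ρ,μ,κ}` gives `(κ/2)‖p_DS*‖² ≤ E`. Writing `q = e^{-t/2}`, the hypotheses bound the regularized gap by `E q²`
and `κ‖p - p_DS*‖²` by `2 E q²`, hence `κ ‖p_DS*‖ ‖p - p_DS*‖ ≤ 2 E q` by multiplying the two
bounds. Removing the regularizer costs `(κ/2)(‖p_DS*‖² - ‖p‖²) ≤ κ ‖p_DS*‖ ‖p - p_DS*‖`, so the
unregularized gap is at most `E q² + 2 E q ≤ 3 E q`.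
-/

section

variable {F : Type*} [SeminormedAddCommGroup F]

theorem sq_norm_sub_sq_norm_le_two_mul_norm_mul_norm_sub (a b : F) :
    ‖a‖ ^ 2 - ‖b‖ ^ 2 ≤ 2 * ‖a‖ * ‖b - a‖ := by
  have h : ‖a‖ - ‖b - a‖ ≤ ‖b‖ := by
    linarith [norm_sub_norm_le a b, norm_sub_rev a b]
  rcases le_total ‖b - a‖ ‖a‖ with hd | hd
  · nlinarith [mul_le_mul h h (sub_nonneg.2 hd) (norm_nonneg b), sq_nonneg ‖b - a‖]
  · nlinarith [norm_nonneg a, norm_nonneg b]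

theorem sub_le_three_mul_of_regularized_gap_le (θ : F → ℝ) {κ q : ℝ} (hκ : 0 < κ)
    (hq₀ : 0 ≤ q) (hq₁ : q ≤ 1) {p₀ p : F}
    (hp₀ : θ p₀ + κ / 2 * ‖p₀‖ ^ 2 ≤ θ 0)
    (hgap : θ p + κ / 2 * ‖p‖ ^ 2 - (θ p₀ + κ / 2 * ‖p₀‖ ^ 2) ≤ (θ 0 - θ p₀) * q ^ 2)
    (hdist : ‖p - p₀‖ ^ 2 ≤ 2 / κ * ((θ 0 - θ p₀) * q ^ 2)) :
    θ p - θ p₀ ≤ 3 * (θ 0 - θ p₀) * q := by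
  set E := θ 0 - θ p₀
  set a := ‖p₀‖
  set b := ‖p - p₀‖
  have ha : κ * a ^ 2 ≤ 2 * E := by linarith
  have hb : κ * b ^ 2 ≤ 2 * E * q ^ 2 := by
    calc κ * b ^ 2 ≤ κ * (2 / κ * (E * q ^ 2)) := by gcongr
      _ = 2 * E * q ^ 2 := by field_simp
  have hE : 0 ≤ E := by nlinarith [sq_nonneg a]
  have hab : κ * a * b ≤ 2 * E * q := by
    refine le_of_sq_le_sq ?_ (by positivity)
    calc (κ * a * b) ^ 2 = (κ * a ^ 2) * (κ * b ^ 2) := by ring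
      _ ≤ (2 * E) * (2 * E * q ^ 2) := by gcongr
      _ = (2 * E * q) ^ 2 := by ring
  have hnorm := sq_norm_sub_sq_norm_le_two_mul_norm_mul_norm_sub p₀ p
  have hq : q ^ 2 ≤ q := by nlinarith
  calc θ p - θ p₀ ≤ E * q ^ 2 + κ / 2 * (a ^ 2 - ‖p‖ ^ 2) := by linarith
    _ ≤ E * q + κ / 2 * (2 * a * b) := by gcongr
    _ ≤ 3 * E * q := by linarith

end

theorem stmt12_general (n m : ℕ) (f : Euc n → EReal) (g : Euc m → EReal)
    (A : Euc n →L[ℝ] Euc m)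
    (ρ μ κ : ℝ) (hκ : 0 < κ)
    (pDS : Euc m) (hpDS : UniqMin (thetaSmK f g A ρ μ κ) pDS)
    (p : Euc m) (t : ℝ) (ht : 0 ≤ t)
    (h1 : thetaSmK f g A ρ μ κ p - thetaSmK f g A ρ μ κ pDS
        ≤ (thetaSm f g A ρ μ 0 - thetaSm f g A ρ μ pDS) * Real.exp (-t))
    (h2 : ‖p - pDS‖ ^ 2 ≤ min (‖pDS‖ ^ 2)
        (2 / κ * ((thetaSm f g A ρ μ 0 - thetaSm f g A ρ μ pDS) * Real.exp (-t)))) :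
    thetaSm f g A ρ μ p - thetaSm f g A ρ μ pDS
      ≤ 25 / 8 * (thetaSm f g A ρ μ 0 - thetaSm f g A ρ μ pDS) * Real.exp (-t / 2) := by
  set θ := thetaSm f g A ρ μ
  have hexp : Real.exp (-t) = Real.exp (-t / 2) ^ 2 := by
    rw [← Real.exp_nat_mul]; ring_nf
  rw [hexp] at h1 h2
  have hp₀ : θ pDS + κ / 2 * ‖pDS‖ ^ 2 ≤ θ 0 := by
    simpa [thetaSmK] using hpDS.1 0
  have hE : 0 ≤ θ 0 - θ pDS := by
    have : 0 ≤ κ / 2 * ‖pDS‖ ^ 2 := by positivity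
    linarith
  calc θ p - θ pDS ≤ 3 * (θ 0 - θ pDS) * Real.exp (-t / 2) :=
        sub_le_three_mul_of_regularized_gap_le θ hκ (Real.exp_pos _).le
          (Real.exp_le_one_iff.2 (by linarith)) hp₀ h1 (h2.trans (min_le_right _ _))
    _ ≤ 25 / 8 * (θ 0 - θ pDS) * Real.exp (-t / 2) := by
        gcongr
        norm_num

/-- Decay estimate along the fast gradient method: with
`E = θ_{ρ,μ}(0) - θ_{ρ,μ}(p_DS*)`, if `θ_{ρ,μ,κ}(p) - θ_{ρ,μ,κ}(p_DS*) ≤ E e^{-t}` and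
`‖p - p_DS*‖² ≤ min {‖p_DS*‖², (2/κ) E e^{-t}}`, then
`θ_{ρ,μ}(p) - θ_{ρ,μ}(p_DS*) ≤ (25/8) E e^{-t/2}`. -/
theorem stmt12 (n m : ℕ) (f : Euc n → EReal) (g : Euc m → EReal)
    (A : Euc n →L[ℝ] Euc m) (hf : NiceFn f) (hg : NiceFn g)
    (ρ μ κ : ℝ) (hρ : 0 < ρ) (hμ : 0 < μ) (hκ : 0 < κ)
    (pDS : Euc m) (hpDS : UniqMin (thetaSmK f g A ρ μ κ) pDS)
    (p : Euc m) (t : ℝ) (ht : 0 ≤ t)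
    (h1 : thetaSmK f g A ρ μ κ p - thetaSmK f g A ρ μ κ pDS
        ≤ (thetaSm f g A ρ μ 0 - thetaSm f g A ρ μ pDS) * Real.exp (-t))
    (h2 : ‖p - pDS‖ ^ 2 ≤ min (‖pDS‖ ^ 2)
        (2 / κ * ((thetaSm f g A ρ μ 0 - thetaSm f g A ρ μ pDS) * Real.exp (-t)))) :
    thetaSm f g A ρ μ p - thetaSm f g A ρ μ pDS
      ≤ 25 / 8 * (thetaSm f g A ρ μ 0 - thetaSm f g A ρ μ pDS) * Real.exp (-t / 2) :=
  stmt12_general n m f g A ρ μ κ hκ pDS hpDS p t ht h1 h2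
end
end

section
/- For all ρ > 0, μ > 0, κ > 0, if p* is an optimal solution of the dual problem (a minimizer of θ) and p_DS* is the unique minimizer of θ_{ρ,μ,κ}, then ‖p_DS*‖² ≤ ‖p*‖² + (2ρ/κ)D_f + (2μ/κ)D_g. In particular, if ε > 0, D_f > 0, D_g > 0, R > 0, ‖p*‖ ≤ R, and ρ = ε/(4 D_f), μ = ε/(4 D_g), κ = ε/(2 R²), then ‖p_DS*‖ ≤ √3·R. -/
open scoped RealInnerProductSpace
noncomputable section

/-!
The Moreau-type smoothing costs little: for `x ∈ dom f` one has
`⟨q,x⟩ - f x - (ρ/2)‖x‖² ≥ ⟨q,x⟩ - f x - ρ D_f`, so `f_ρ* ≤ f* ≤ f_ρ* + ρ D_f`, and likewise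
for `g`. Hence `θ_{ρ,μ} ≤ θ ≤ θ_{ρ,μ} + ρ D_f + μ D_g`. Comparing `θ_{ρ,μ,κ}` at its minimizer
`p_DS*` and at `p*`, and using that `p*` minimizes `θ`, gives
`(κ/2)‖p_DS*‖² ≤ (κ/2)‖p*‖² + ρ D_f + μ D_g`.
The parameter choice makes both smoothing terms equal to `R²`.
-/

theorem LowerSemicontinuous.exists_forall_coe_le_of_isBounded {E : Type*} [PseudoMetricSpace E]
    [ProperSpace E] {f : E → EReal} (hbot : ∀ x, f x ≠ ⊥) (hl : LowerSemicontinuous f)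
    (hdom : ∃ x, f x ≠ ⊤) (hb : Bornology.IsBounded {x | f x ≠ ⊤}) :
    ∃ b : ℝ, ∀ x, (b : EReal) ≤ f x := by
  obtain ⟨x₀, hx₀⟩ := hdom
  obtain ⟨a, -, ha⟩ := hl.lowerSemicontinuousOn _ |>.exists_isMinOn
    ⟨x₀, subset_closure hx₀⟩ hb.isCompact_closure
  refine ⟨(f a).toReal, fun x => (EReal.coe_toReal_le (hbot a)).trans ?_⟩
  by_cases hx : f x = ⊤
  · exact hx ▸ le_top
  · exact ha (subset_closure hx)

/-- The bounds keep `⨆ x, t x - f x` finite, so `toReal` does not collapse it to the junk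
value `0`. -/
theorem isLUB_toReal_iSup_coe_sub {α : Type*} {f : α → EReal} (hbot : ∀ x, f x ≠ ⊥)
    (hdom : ∃ x, f x ≠ ⊤) {b : ℝ} (hb : ∀ x, (b : EReal) ≤ f x) {t : α → ℝ} {C : ℝ}
    (hC : ∀ x, f x ≠ ⊤ → t x ≤ C) :
    IsLUB ((fun x => t x - (f x).toReal) '' {x | f x ≠ ⊤})
      (⨆ x, ((t x : ℝ) : EReal) - f x).toReal := by
  set S := ⨆ x, ((t x : ℝ) : EReal) - f x
  have hcoe : ∀ x, f x ≠ ⊤ → ((t x - (f x).toReal : ℝ) : EReal) = (t x : EReal) - f x :=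
    fun x hx => by rw [EReal.coe_sub, EReal.coe_toReal hx (hbot x)]
  have hle : ∀ x, f x ≠ ⊤ → ((t x - (f x).toReal : ℝ) : EReal) ≤ S := fun x hx =>
    hcoe x hx ▸ le_iSup (fun y => ((t y : ℝ) : EReal) - f y) x
  have hS_le : ∀ u : ℝ, u ∈ upperBounds ((fun x => t x - (f x).toReal) '' {x | f x ≠ ⊤}) →
      S ≤ u := by
    refine fun u hu => iSup_le fun x => ?_
    by_cases hx : f x = ⊤
    · simp [hx]
    · exact hcoe x hx ▸ EReal.coe_le_coe_iff.mpr (hu ⟨x, hx, rfl⟩)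
  have hS_top : S ≠ ⊤ := by
    refine ne_top_of_le_ne_top (EReal.coe_ne_top (C - b)) (hS_le _ ?_)
    rintro _ ⟨x, hx, rfl⟩
    have hbx : b ≤ (f x).toReal := by
      simpa using EReal.toReal_le_toReal (hb x) (EReal.coe_ne_bot b) hx
    linarith [hC x hx]
  have hS_bot : S ≠ ⊥ := by
    obtain ⟨x₀, hx₀⟩ := hdom
    exact ne_bot_of_le_ne_bot (EReal.coe_ne_bot _) (hle x₀ hx₀)
  refine ⟨?_, fun u hu => ?_⟩
  · rintro _ ⟨x, hx, rfl⟩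
    simpa only [EReal.toReal_coe] using
      EReal.toReal_le_toReal (hle x hx) (EReal.coe_ne_bot _) hS_top
  · simpa only [EReal.toReal_coe] using
      EReal.toReal_le_toReal (hS_le u hu) hS_bot (EReal.coe_ne_top _)

section Conjugate

variable {k : ℕ} {f : Euc k → EReal}

theorem half_norm_sq_le_Dsup (hb : Bornology.IsBounded {x | f x ≠ ⊤}) {x : Euc k}
    (hx : f x ≠ ⊤) : ‖x‖ ^ 2 / 2 ≤ Dsup f := by
  obtain ⟨M, hM⟩ := isBounded_iff_forall_norm_le.mp hb
  refine le_csSup ⟨M ^ 2 / 2, ?_⟩ ⟨x, hx, rfl⟩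
  rintro _ ⟨y, hy, rfl⟩
  have := hM y hy
  nlinarith [norm_nonneg y]

theorem conjSm_le_conjFn_and_conjFn_le_conjSm_add (hf : IsProperFn f) (hl : LowerSemicontinuous f)
    (hb : Bornology.IsBounded {x | f x ≠ ⊤}) {r : ℝ} (hr : 0 < r) (q : Euc k) :
    conjSm f r q ≤ conjFn f q ∧ conjFn f q ≤ conjSm f r q + r * Dsup f := by
  obtain ⟨hbot, hdom⟩ := hf
  obtain ⟨b, hfb⟩ := hl.exists_forall_coe_le_of_isBounded hbot hdom hb
  obtain ⟨M, hM⟩ := isBounded_iff_forall_norm_le.mp hb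
  have hinner : ∀ x, f x ≠ ⊤ → ⟪q, x⟫ ≤ ‖q‖ * M := fun x hx =>
    (real_inner_le_norm q x).trans (mul_le_mul_of_nonneg_left (hM x hx) (norm_nonneg q))
  have hconj := isLUB_toReal_iSup_coe_sub hbot hdom hfb hinner
  have hsm := isLUB_toReal_iSup_coe_sub hbot hdom hfb
    (t := fun x => ⟪q, x⟫ - r / 2 * ‖x‖ ^ 2) (C := ‖q‖ * M)
    fun x hx => by nlinarith [hinner x hx, sq_nonneg ‖x‖]
  constructor
  · refine hsm.2 ?_
    rintro _ ⟨x, hx, rfl⟩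
    have := hconj.1 ⟨x, hx, rfl⟩
    simp only [conjFn] at this ⊢
    nlinarith [sq_nonneg ‖x‖]
  · refine hconj.2 ?_
    rintro _ ⟨x, hx, rfl⟩
    have := hsm.1 ⟨x, hx, rfl⟩
    have hD := mul_le_mul_of_nonneg_left (half_norm_sq_le_Dsup hb hx) hr.le
    simp only [conjSm] at this ⊢
    linarith

end Conjugate

theorem norm_sq_le_of_isMin_add_half_norm_sq {E : Type*} [SeminormedAddCommGroup E]
    {φ θ : E → ℝ} {c κ : ℝ} (hκ : 0 < κ) (hφθ : ∀ p, φ p ≤ θ p) (hθφ : ∀ p, θ p ≤ φ p + c)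
    {p₀ q : E} (hp₀ : ∀ p, θ p₀ ≤ θ p) (hq : ∀ p, φ q + κ / 2 * ‖q‖ ^ 2 ≤ φ p + κ / 2 * ‖p‖ ^ 2) :
    ‖q‖ ^ 2 ≤ ‖p₀‖ ^ 2 + 2 * c / κ := by
  have : κ / 2 * ‖q‖ ^ 2 ≤ κ / 2 * ‖p₀‖ ^ 2 + c := by
    linarith [hq p₀, hφθ p₀, hθφ q, hp₀ q]
  rw [← sub_nonneg] at this ⊢
  have hid : ‖p₀‖ ^ 2 + 2 * c / κ - ‖q‖ ^ 2
      = 2 / κ * (κ / 2 * ‖p₀‖ ^ 2 + c - κ / 2 * ‖q‖ ^ 2) := by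
    field_simp
  rw [hid]
  positivity

/-- Bound on the minimizer of the doubly smoothed dual objective:
`‖p_DS*‖² ≤ ‖p*‖² + (2ρ/κ) D_f + (2μ/κ) D_g`, and for the parameter choice
`ρ = ε/(4 D_f), μ = ε/(4 D_g), κ = ε/(2R²)` with `‖p*‖ ≤ R` one has `‖p_DS*‖ ≤ √3 R`. -/
theorem stmt14 (n m : ℕ) (f : Euc n → EReal) (g : Euc m → EReal)
    (A : Euc n →L[ℝ] Euc m) (hf : NiceFn f) (hg : NiceFn g)
    (ρ μ κ : ℝ) (hρ : 0 < ρ) (hμ : 0 < μ) (hκ : 0 < κ)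
    (pstar : Euc m) (hpstar : ∀ p, theta f g A pstar ≤ theta f g A p)
    (pDS : Euc m) (hpDS : UniqMin (thetaSmK f g A ρ μ κ) pDS) :
    ‖pDS‖ ^ 2 ≤ ‖pstar‖ ^ 2 + 2 * ρ / κ * Dsup f + 2 * μ / κ * Dsup g ∧
    ∀ ε R : ℝ, 0 < ε → 0 < Dsup f → 0 < Dsup g → 0 < R → ‖pstar‖ ≤ R →
      ρ = ε / (4 * Dsup f) → μ = ε / (4 * Dsup g) → κ = ε / (2 * R ^ 2) →
      ‖pDS‖ ≤ Real.sqrt 3 * R := by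
  obtain ⟨hfp, -, hfl, hfb⟩ := hf
  obtain ⟨hgp, -, hgl, hgb⟩ := hg
  have Hf := conjSm_le_conjFn_and_conjFn_le_conjSm_add hfp hfl hfb hρ
  have Hg := conjSm_le_conjFn_and_conjFn_le_conjSm_add hgp hgl hgb hμ
  have key := norm_sq_le_of_isMin_add_half_norm_sq (φ := thetaSm f g A ρ μ) (θ := theta f g A)
    (c := ρ * Dsup f + μ * Dsup g) hκ
    (fun p => add_le_add (Hf _).1 (Hg _).1)
    (fun p => by simp only [theta, thetaSm]; linarith [(Hf (A.adjoint p)).2, (Hg (-p)).2])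
    hpstar hpDS.1
  have hbound : ‖pDS‖ ^ 2 ≤ ‖pstar‖ ^ 2 + 2 * ρ / κ * Dsup f + 2 * μ / κ * Dsup g := by
    convert key using 1
    ring
  refine ⟨hbound, fun ε R hε hDf hDg hR hpR hρε hμε hκε => ?_⟩
  have hρR : 2 * ρ / κ * Dsup f = R ^ 2 := by subst hρε hκε; field_simp; ring
  have hμR : 2 * μ / κ * Dsup g = R ^ 2 := by subst hμε hκε; field_simp; ring
  have hsq : ‖pDS‖ ^ 2 ≤ (Real.sqrt 3 * R) ^ 2 := by
    rw [mul_pow, Real.sq_sqrt (by norm_num)]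
    nlinarith [norm_nonneg pstar]
  exact (pow_le_pow_iff_left₀ (norm_nonneg _) (by positivity) two_ne_zero).1 hsq
end
end

section
/- Let (x_l)_{l≥0} ⊆ dom f and (y_l)_{l≥0} ⊆ dom g be sequences with x_l → x̄ ∈ ℝ^n and y_l → ȳ ∈ ℝ^m, and let (ε_l)_{l≥0} be a sequence of positive reals with ε_l → 0 such that for every l ≥ 0: ‖A x_l − y_l‖ ≤ (2/R)·ε_l and f(x_l) + g(y_l) ≤ v(D) + 2(1 + 2√3)·ε_l, where R > 0. Then A x̄ = ȳ, x̄ ∈ dom f, A x̄ ∈ dom g, and x̄ is an optimal solution of the primal problem, i.e. f(x̄) + g(A x̄) = v(P). -/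
open scoped RealInnerProductSpace
noncomputable section

-- every NiceFn is bounded below
lemma nice_bddBelow {k : ℕ} {f : Euc k → EReal} (hf : NiceFn f) :
    ∃ M : ℝ, ∀ x, (M : EReal) ≤ f x := by
  by_contra h
  push_neg at h
  choose u hu using fun j : ℕ => h (-(j : ℝ))
  have hmem : ∀ j, u j ∈ {x | f x ≠ ⊤} := by
    intro j
    simp only [Set.mem_setOf_eq]
    intro htop
    exact absurd (hu j) (by simp [htop])
  obtain ⟨z, -, φ, hφ, htend⟩ := tendsto_subseq_of_bounded hf.2.2.2 hmem
  obtain ⟨c, hc⟩ : ∃ c : ℝ, (c : EReal) < f z := by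
    rcases eq_or_ne (f z) ⊤ with hz | hz
    · exact ⟨0, by simp [hz]⟩
    · refine ⟨(f z).toReal - 1, ?_⟩
      conv_rhs => rw [← EReal.coe_toReal hz (hf.1.1 z)]
      exact_mod_cast sub_one_lt _
  have hev : ∀ᶠ j in Filter.atTop, (c : EReal) < f (u (φ j)) :=
    htend.eventually (hf.2.2.1 z c hc)
  have hev2 : ∀ᶠ j : ℕ in Filter.atTop, -c ≤ (j : ℝ) :=
    (tendsto_natCast_atTop_atTop (R := ℝ)).eventually_ge_atTop (-c)
  obtain ⟨j, h1, h2⟩ := (hev.and hev2).exists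
  have h3 : f (u (φ j)) < ((-(φ j : ℝ) : ℝ) : EReal) := hu (φ j)
  have h4 : ((-(φ j : ℝ) : ℝ) : EReal) ≤ (c : EReal) := by
    rw [EReal.coe_le_coe_iff]
    have : (j : ℝ) ≤ (φ j : ℝ) := by exact_mod_cast hφ.le_apply
    linarith
  exact absurd (h1.trans (h3.trans_le h4)) (lt_irrefl _)

lemma conjE_ne_top {k : ℕ} {f : Euc k → EReal} (hf : NiceFn f) (q : Euc k) :
    conjE f q ≠ ⊤ := by
  obtain ⟨M, hM⟩ := nice_bddBelow hf
  obtain ⟨r, hr⟩ := hf.2.2.2.subset_closedBall 0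
  have : conjE f q ≤ ((‖q‖ * r - M : ℝ) : EReal) := by
    refine iSup_le fun x => ?_
    rcases eq_or_ne (f x) ⊤ with hx | hx
    · rw [hx, EReal.sub_top]; exact bot_le
    · have hxball : x ∈ Metric.closedBall (0 : Euc k) r := hr hx
      have hnorm : ‖x‖ ≤ r := by simpa using hxball
      have hip : ⟪q, x⟫ ≤ ‖q‖ * r := by
        calc ⟪q, x⟫ ≤ ‖q‖ * ‖x‖ := real_inner_le_norm q x
        _ ≤ ‖q‖ * r := by nlinarith [norm_nonneg q]
      have hfx : ((M : ℝ) : EReal) ≤ f x := hM x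
      have hbot : f x ≠ ⊥ := hf.1.1 x
      rw [← EReal.coe_toReal hx hbot]
      rw [← EReal.coe_sub, EReal.coe_le_coe_iff]
      have : M ≤ (f x).toReal := by
        have := EReal.toReal_le_toReal hfx (by simp) hx
        simpa using this
      linarith
  exact ne_top_of_le_ne_top (EReal.coe_ne_top _) this

lemma conjE_ne_bot {k : ℕ} {f : Euc k → EReal} (hf : NiceFn f) (q : Euc k) :
    conjE f q ≠ ⊥ := by
  obtain ⟨x0, hx0⟩ := hf.1.2
  have hle : ((⟪q, x0⟫ : ℝ) : EReal) - f x0 ≤ conjE f q := le_iSup (fun z => ((⟪q, z⟫ : ℝ) : EReal) - f z) x0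
  have : ((⟪q, x0⟫ - (f x0).toReal : ℝ) : EReal) ≤ conjE f q := by
    rwa [EReal.coe_sub, EReal.coe_toReal hx0 (hf.1.1 x0)]
  intro hb
  rw [hb, le_bot_iff] at this
  exact EReal.coe_ne_bot _ this

lemma inner_sub_le_conjFn {k : ℕ} {f : Euc k → EReal} (hf : NiceFn f) (q x : Euc k)
    (hx : f x ≠ ⊤) : ⟪q, x⟫ - (f x).toReal ≤ conjFn f q := by
  have hle : ((⟪q, x⟫ : ℝ) : EReal) - f x ≤ conjE f q := le_iSup (fun z => ((⟪q, z⟫ : ℝ) : EReal) - f z) x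
  have h2 : ((⟪q, x⟫ - (f x).toReal : ℝ) : EReal) ≤ conjE f q := by
    rwa [EReal.coe_sub, EReal.coe_toReal hx (hf.1.1 x)]
  have h3 := EReal.toReal_le_toReal h2 (EReal.coe_ne_bot _) (conjE_ne_top hf q)
  rw [EReal.toReal_coe] at h3
  exact h3

lemma weak_duality {n m : ℕ} {f : Euc n → EReal} {g : Euc m → EReal}
    {A : Euc n →L[ℝ] Euc m} (hf : NiceFn f) (hg : NiceFn g)
    (x : Euc n) (hx : f x ≠ ⊤) (hgx : g (A x) ≠ ⊤) :
    vDual f g A ≤ (f x).toReal + (g (A x)).toReal := by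
  rw [vDual, neg_le]
  refine le_ciInf fun p => ?_
  have h1 := inner_sub_le_conjFn hf (ContinuousLinearMap.adjoint A p) x hx
  have h2 := inner_sub_le_conjFn hg (-p) (A x) hgx
  have hadj : ⟪ContinuousLinearMap.adjoint A p, x⟫ = ⟪p, A x⟫ :=
    ContinuousLinearMap.adjoint_inner_left A x p
  have hneg : ⟪-p, A x⟫ = -⟪p, A x⟫ := inner_neg_left _ _
  rw [hadj] at h1
  rw [hneg] at h2
  unfold theta
  linarith

lemma vDual_le_vPrimal {n m : ℕ} {f : Euc n → EReal} {g : Euc m → EReal}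
    {A : Euc n →L[ℝ] Euc m} (hf : NiceFn f) (hg : NiceFn g) :
    ((vDual f g A : ℝ) : EReal) ≤ vPrimal f g A := by
  refine le_iInf fun x => ?_
  rcases eq_or_ne (f x) ⊤ with hx | hx
  · rw [hx, EReal.top_add_of_ne_bot (hg.1.1 _)]; exact le_top
  rcases eq_or_ne (g (A x)) ⊤ with hgx | hgx
  · rw [hgx, EReal.add_top_of_ne_bot (hf.1.1 _)]; exact le_top
  have := weak_duality hf hg x hx hgx
  calc ((vDual f g A : ℝ) : EReal) ≤ (((f x).toReal + (g (A x)).toReal : ℝ) : EReal) := by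
        exact_mod_cast this
    _ = f x + g (A x) := by
        rw [EReal.coe_add, EReal.coe_toReal hx (hf.1.1 x), EReal.coe_toReal hgx (hg.1.1 _)]


/-- Convergence to an optimal primal solution: approximately feasible and approximately
optimal sequences converge to a point `x̄` with `A x̄ = ȳ`, `x̄ ∈ dom f`, `A x̄ ∈ dom g`,
and `f(x̄) + g(A x̄) = v(P)`. -/
theorem stmt17 (n m : ℕ) (f : Euc n → EReal) (g : Euc m → EReal)
    (A : Euc n →L[ℝ] Euc m) (hf : NiceFn f) (hg : NiceFn g)
    (hfeas : ∃ x, f x ≠ ⊤ ∧ g (A x) ≠ ⊤)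
    (R : ℝ) (hR : 0 < R)
    (x : ℕ → Euc n) (y : ℕ → Euc m) (ε : ℕ → ℝ)
    (hxdom : ∀ l, f (x l) ≠ ⊤) (hydom : ∀ l, g (y l) ≠ ⊤)
    (xbar : Euc n) (ybar : Euc m)
    (hx : Filter.Tendsto x Filter.atTop (nhds xbar))
    (hy : Filter.Tendsto y Filter.atTop (nhds ybar))
    (hεpos : ∀ l, 0 < ε l) (hεlim : Filter.Tendsto ε Filter.atTop (nhds 0))
    (hfeas2 : ∀ l, ‖A (x l) - y l‖ ≤ 2 / R * ε l)
    (hval : ∀ l, f (x l) + g (y l)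
        ≤ ((vDual f g A + 2 * (1 + 2 * Real.sqrt 3) * ε l : ℝ) : EReal)) :
    A xbar = ybar ∧ f xbar ≠ ⊤ ∧ g (A xbar) ≠ ⊤ ∧
      f xbar + g (A xbar) = vPrimal f g A := by
  set C : ℝ := 2 * (1 + 2 * Real.sqrt 3) with hCdef
  have hCpos : 0 < C := by
    have := Real.sqrt_nonneg 3
    rw [hCdef]; nlinarith
  obtain ⟨Mf, hMf⟩ := nice_bddBelow hf
  obtain ⟨Mg, hMg⟩ := nice_bddBelow hg
  set vD := vDual f g A with hvD
  -- Step 1: A xbar = ybar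
  have hABlim : Filter.Tendsto (fun l => ‖A (x l) - y l‖) Filter.atTop
      (nhds ‖A xbar - ybar‖) := (((A.continuous.tendsto xbar).comp hx).sub hy).norm
  have hzero : Filter.Tendsto (fun l => 2 / R * ε l) Filter.atTop (nhds 0) := by
    simpa using hεlim.const_mul (2 / R)
  have hAeq : A xbar = ybar := by
    have hle : ‖A xbar - ybar‖ ≤ 0 := le_of_tendsto_of_tendsto' hABlim hzero hfeas2
    have : A xbar - ybar = 0 := by
      rw [← norm_le_zero_iff]; exact hle
    exact sub_eq_zero.mp this
  -- Real-valued bounds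
  have hval' : ∀ l, (f (x l)).toReal + (g (y l)).toReal ≤ vD + C * ε l := by
    intro l
    have h := hval l
    rw [← EReal.coe_toReal (hxdom l) (hf.1.1 _), ← EReal.coe_toReal (hydom l) (hg.1.1 _),
      ← EReal.coe_add, EReal.coe_le_coe_iff] at h
    exact h
  have hMfa : ∀ l, Mf ≤ (f (x l)).toReal := fun l => by
    have := EReal.toReal_le_toReal (hMf (x l)) (EReal.coe_ne_bot _) (hxdom l)
    simpa using this
  have hMgb : ∀ l, Mg ≤ (g (y l)).toReal := fun l => by
    have := EReal.toReal_le_toReal (hMg (y l)) (EReal.coe_ne_bot _) (hydom l)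
    simpa using this
  have hεev : ∀ᶠ l in Filter.atTop, ε l < 1 := hεlim.eventually_lt_const one_pos
  -- Step 2: f xbar finite
  have hfxbar : f xbar ≤ ((vD + C - Mg : ℝ) : EReal) := by
    by_contra hcon
    push_neg at hcon
    have hev1 : ∀ᶠ l in Filter.atTop, ((vD + C - Mg : ℝ) : EReal) < f (x l) :=
      hx.eventually (hf.2.2.1 xbar _ hcon)
    obtain ⟨l, h1, h2⟩ := (hev1.and hεev).exists
    have h3 : (f (x l)).toReal ≤ vD + C - Mg := by
      have hv := hval' l
      have hm := hMgb l
      nlinarith [hεpos l]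
    have h4 : f (x l) ≤ ((vD + C - Mg : ℝ) : EReal) := by
      rw [← EReal.coe_toReal (hxdom l) (hf.1.1 _)]
      exact_mod_cast h3
    exact absurd (h1.trans_le h4) (lt_irrefl _)
  have hgybar : g ybar ≤ ((vD + C - Mf : ℝ) : EReal) := by
    by_contra hcon
    push_neg at hcon
    have hev1 : ∀ᶠ l in Filter.atTop, ((vD + C - Mf : ℝ) : EReal) < g (y l) :=
      hy.eventually (hg.2.2.1 ybar _ hcon)
    obtain ⟨l, h1, h2⟩ := (hev1.and hεev).exists
    have h3 : (g (y l)).toReal ≤ vD + C - Mf := by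
      have hv := hval' l
      have hm := hMfa l
      nlinarith [hεpos l]
    have h4 : g (y l) ≤ ((vD + C - Mf : ℝ) : EReal) := by
      rw [← EReal.coe_toReal (hydom l) (hg.1.1 _)]
      exact_mod_cast h3
    exact absurd (h1.trans_le h4) (lt_irrefl _)
  have hfx_ne : f xbar ≠ ⊤ := ne_top_of_le_ne_top (EReal.coe_ne_top _) hfxbar
  have hgy_ne : g ybar ≠ ⊤ := ne_top_of_le_ne_top (EReal.coe_ne_top _) hgybar
  set a := (f xbar).toReal with ha
  set b := (g ybar).toReal with hb
  -- Step 3: a + b ≤ vD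
  have key : ∀ δ : ℝ, 0 < δ → a + b ≤ vD + δ := by
    intro δ hδ
    have e1 : ∀ᶠ l in Filter.atTop, C * ε l < δ / 3 := by
      have h : Filter.Tendsto (fun l => C * ε l) Filter.atTop (nhds 0) := by
        simpa using hεlim.const_mul C
      exact h.eventually_lt_const (by positivity)
    have haa : ((a - δ / 3 : ℝ) : EReal) < f xbar := by
      rw [← EReal.coe_toReal hfx_ne (hf.1.1 xbar)]
      exact_mod_cast (by linarith : a - δ / 3 < a)
    have hbb : ((b - δ / 3 : ℝ) : EReal) < g ybar := by
      rw [← EReal.coe_toReal hgy_ne (hg.1.1 ybar)]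
      exact_mod_cast (by linarith : b - δ / 3 < b)
    have e2 : ∀ᶠ l in Filter.atTop, ((a - δ / 3 : ℝ) : EReal) < f (x l) :=
      hx.eventually (hf.2.2.1 xbar _ haa)
    have e3 : ∀ᶠ l in Filter.atTop, ((b - δ / 3 : ℝ) : EReal) < g (y l) :=
      hy.eventually (hg.2.2.1 ybar _ hbb)
    obtain ⟨l, ⟨h1, h2⟩, h3⟩ := ((e1.and e2).and e3).exists
    rw [← EReal.coe_toReal (hxdom l) (hf.1.1 _), EReal.coe_lt_coe_iff] at h2
    rw [← EReal.coe_toReal (hydom l) (hg.1.1 _), EReal.coe_lt_coe_iff] at h3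
    have hv := hval' l
    linarith
  have hab : a + b ≤ vD := by
    by_contra hcon
    push_neg at hcon
    have := key ((a + b - vD) / 2) (by linarith)
    linarith
  -- Conclusion
  have hsum : f xbar + g (A xbar) = ((a + b : ℝ) : EReal) := by
    rw [hAeq, EReal.coe_add, ha, hb, EReal.coe_toReal hfx_ne (hf.1.1 _),
      EReal.coe_toReal hgy_ne (hg.1.1 _)]
  refine ⟨hAeq, hfx_ne, by rw [hAeq]; exact hgy_ne, ?_⟩
  have hle1 : vPrimal f g A ≤ f xbar + g (A xbar) := iInf_le _ xbar
  have hle2 : f xbar + g (A xbar) ≤ vPrimal f g A := by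
    rw [hsum]
    calc ((a + b : ℝ) : EReal) ≤ ((vD : ℝ) : EReal) := by exact_mod_cast hab
      _ ≤ vPrimal f g A := vDual_le_vPrimal hf hg
  exact le_antisymm hle2 hle1
end
end
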